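/- arXiv:0810.2279 — 8 statements merged into one kernel-verified Lean document; each statement's English description precedes it below -/
import Mathlib

section
/- Let k ≥ 2 and n ≥ k+1, and let f, g : K^n → K where K = {0,...,k-1}. If for all i ≠ j (1 ≤ i, j ≤ n) the identification minors satisfy f_{i←j} = g_{i←j}, then f = g. -/
open scoped Classical

/-- The identification minor `f_{i←j}`: the `i`-th argument is replaced by the `j`-th. -/
def minor {n k : ℕ} (f : (Fin n → Fin k) → Fin k) (i j : Fin n) :
    (Fin n → Fin k) → Fin k :=
  fun a => f (Function.update a i (a j))

/-- The variable `x_i` is essential in `f`. -/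
def Essential {n k : ℕ} (f : (Fin n → Fin k) → Fin k) (i : Fin n) : Prop :=
  ∃ a : Fin n → Fin k, ∃ b : Fin k, f (Function.update a i b) ≠ f a

/-- The number of essential variables of `f`. -/
noncomputable def essCount {n k : ℕ} (f : (Fin n → Fin k) → Fin k) : ℕ :=
  (Finset.univ.filter (fun i => Essential f i)).card

/-- The essential arity gap of `f`. -/
noncomputable def gap {n k : ℕ} (f : (Fin n → Fin k) → Fin k) : ℕ :=
  essCount f -
    Finset.sup
      (Finset.univ.filter
        (fun p : Fin n × Fin n =>
          p.1 ≠ p.2 ∧ Essential f p.1 ∧ Essential f p.2))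
      (fun p => essCount (minor f p.1 p.2))

theorem minors_determine_function {k n : ℕ} (hk : 2 ≤ k) (hn : k + 1 ≤ n)
    (f g : (Fin n → Fin k) → Fin k)
    (h : ∀ i j : Fin n, i ≠ j → minor f i j = minor g i j) :
    f = g := by
  funext a
  have hlt : Fintype.card (Fin k) < Fintype.card (Fin n) := by simp; omega
  obtain ⟨i, j, hij, heq⟩ := Fintype.exists_ne_map_eq_of_card_lt a hlt
  have hupd : Function.update a i (a j) = a := by
    rw [← heq]; exact Function.update_eq_self i a
  have := congrFun (h i j hij) a
  simpa [minor, hupd] using this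
end

section
/- Let 2 ≤ n ≤ k and let f : K^n → K depend essentially on all n variables with gap(f) = n (i.e., every nontrivial identification minor of f has no essential variables). Then for every tuple (α_1,...,α_n) ∈ K^n having at least two equal coordinates, f(α_1,...,α_n) = f(0,...,0). -/
open scoped Classical

theorem constant_on_eq_tuples {k n : ℕ} (hn : 2 ≤ n) (hnk : n ≤ k)
    (f : (Fin n → Fin k) → Fin k)
    (hess : ∀ i : Fin n, Essential f i)
    (hgap : gap f = n) :
    ∀ a : Fin n → Fin k, (∃ i j : Fin n, i ≠ j ∧ a i = a j) →
      f a = f (fun _ => (⟨0, by omega⟩ : Fin k)) := by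
  -- no essential vars ⇒ constant
  have const_of_no_ess : ∀ (g : (Fin n → Fin k) → Fin k),
      (∀ i, ¬ Essential g i) → ∀ a b, g a = g b := by
    intro g hg
    have step : ∀ (i : Fin n) (a : Fin n → Fin k) (c : Fin k),
        g (Function.update a i c) = g a := by
      intro i a c
      by_contra h
      exact hg i ⟨a, c, h⟩
    have aux : ∀ (s : Finset (Fin n)) (a b : Fin n → Fin k),
        (∀ i ∉ s, a i = b i) → g a = g b := by
      intro s
      induction s using Finset.induction_on with
      | empty =>
        intro a b h
        have : a = b := funext fun i => h i (Finset.notMem_empty i)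
        rw [this]
      | @insert i s hi ih =>
        intro a b h
        have h1 : g a = g (Function.update a i (b i)) := (step i a (b i)).symm
        rw [h1]
        apply ih
        intro j hj
        by_cases hji : j = i
        · subst hji; simp
        · rw [Function.update_of_ne hji]
          exact h j (by simp [hji, hj])
    intro a b
    exact aux Finset.univ a b (fun i hi => absurd (Finset.mem_univ i) hi)
  intro a ⟨i, j, hij, haij⟩
  -- essCount f = n
  have hcf : essCount f = n := by
    unfold essCount
    rw [Finset.filter_true_of_mem (fun i _ => hess i)]
    simp
  -- the sup is 0
  have hsup : Finset.sup
      (Finset.univ.filter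
        (fun p : Fin n × Fin n =>
          p.1 ≠ p.2 ∧ Essential f p.1 ∧ Essential f p.2))
      (fun p => essCount (minor f p.1 p.2)) = 0 := by
    unfold gap at hgap
    rw [hcf] at hgap
    omega
  have hmem : (i, j) ∈ Finset.univ.filter
      (fun p : Fin n × Fin n =>
        p.1 ≠ p.2 ∧ Essential f p.1 ∧ Essential f p.2) := by
    simp [hij, hess i, hess j]
  have hle := Finset.le_sup (f := fun p : Fin n × Fin n => essCount (minor f p.1 p.2)) hmem
  rw [hsup] at hle
  have hzero : essCount (minor f i j) = 0 := Nat.le_zero.mp hle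
  have hnoess : ∀ l, ¬ Essential (minor f i j) l := by
    intro l hl
    have : l ∈ Finset.univ.filter (fun l => Essential (minor f i j) l) := by simp [hl]
    have := Finset.card_ne_zero_of_mem this
    exact this hzero
  have hconst := const_of_no_ess (minor f i j) hnoess
  have h1 : f a = minor f i j a := by
    unfold minor
    rw [← haij, Function.update_eq_self]
  have h2 : f (fun _ => (⟨0, by omega⟩ : Fin k)) =
      minor f i j (fun _ => (⟨0, by omega⟩ : Fin k)) := by
    unfold minor
    rw [Function.update_eq_self]
  rw [h1, h2]
  exact hconst _ _
end

section
/- Let 2 ≤ n ≤ k and f : K^n → K depend essentially on all n variables. Then gap(f) = n if and only if f is constant (with some value a_0) on the set Eq_k^n of tuples with at least two equal coordinates, and f is not globally constant, i.e., there exists a tuple with pairwise distinct coordinates where f takes a value different from a_0. -/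
open scoped Classical

lemma const_of_not_essential {n k : ℕ} (g : (Fin n → Fin k) → Fin k)
    (h : ∀ i, ¬ Essential g i) : ∀ a b, g a = g b := by
  intro a b
  have hupd : ∀ (x : Fin n → Fin k) (j : Fin n) (c : Fin k),
      g (Function.update x j c) = g x := by
    intro x j c
    by_contra hc
    exact h j ⟨x, c, hc⟩
  have key : ∀ s : Finset (Fin n),
      g (fun i => if i ∈ s then b i else a i) = g a := by
    intro s
    induction s using Finset.induction_on with
    | empty => simp
    | @insert j s hj ih =>
      have heq : (fun i => if i ∈ insert j s then b i else a i) =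
          Function.update (fun i => if i ∈ s then b i else a i) j (b j) := by
        funext i
        rcases eq_or_ne i j with rfl | hij
        · simp [hj]
        · simp [Function.update_of_ne hij, hij]
      rw [heq, hupd]
      exact ih
  have := key Finset.univ
  simpa using this.symm

theorem gap_eq_n_iff {k n : ℕ} (hn : 2 ≤ n) (hnk : n ≤ k)
    (f : (Fin n → Fin k) → Fin k)
    (hess : ∀ i : Fin n, Essential f i) :
    gap f = n ↔
      ∃ a0 : Fin k,
        (∀ a : Fin n → Fin k, (∃ i j : Fin n, i ≠ j ∧ a i = a j) → f a = a0) ∧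
        (∃ a : Fin n → Fin k, f a ≠ a0) := by
  have hk : 0 < k := lt_of_lt_of_le (by omega) hnk
  have hcard : essCount f = n := by
    unfold essCount
    rw [Finset.filter_true_of_mem (fun i _ => hess i)]
    simp
  set S := Finset.sup
      (Finset.univ.filter
        (fun p : Fin n × Fin n =>
          p.1 ≠ p.2 ∧ Essential f p.1 ∧ Essential f p.2))
      (fun p => essCount (minor f p.1 p.2)) with hS
  have hgap : gap f = n - S := by rw [gap, hcard]
  constructor
  · intro h
    rw [hgap] at h
    have hS0 : S = 0 := by omega
    have hminor : ∀ i j : Fin n, i ≠ j → ∀ a b, minor f i j a = minor f i j b := by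
      intro i j hij
      apply const_of_not_essential
      intro l hl
      have hmem : (i, j) ∈ (Finset.univ.filter
          (fun p : Fin n × Fin n =>
            p.1 ≠ p.2 ∧ Essential f p.1 ∧ Essential f p.2)) := by
        simp [hij, hess i, hess j]
      have hle := Finset.le_sup (f := fun p => essCount (minor f p.1 p.2)) hmem
      rw [← hS, hS0, Nat.le_zero] at hle
      unfold essCount at hle
      rw [Finset.card_eq_zero, Finset.filter_eq_empty_iff] at hle
      exact hle (Finset.mem_univ l) hl
    refine ⟨f (fun _ => ⟨0, hk⟩), ?_, ?_⟩
    · rintro a ⟨i, j, hij, hija⟩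
      have h1 : Function.update a i (a j) = a := by
        rw [← hija]; exact Function.update_eq_self i a
      have h2 : Function.update (fun _ => (⟨0, hk⟩ : Fin k)) i
          ((fun _ => (⟨0, hk⟩ : Fin k)) j) = (fun _ => (⟨0, hk⟩ : Fin k)) :=
        Function.update_eq_self i _
      have := hminor i j hij a (fun _ => ⟨0, hk⟩)
      unfold minor at this
      rw [h1, h2] at this
      exact this
    · by_contra hc
      push_neg at hc
      obtain ⟨a, b, hab⟩ := hess ⟨0, by omega⟩
      exact hab ((hc _).trans (hc a).symm)
  · rintro ⟨a0, h1, h2⟩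
    have hS0 : S = 0 := by
      apply Nat.le_antisymm _ (Nat.zero_le _)
      rw [hS]
      apply Finset.sup_le
      intro p hp
      simp only [Finset.mem_filter] at hp
      obtain ⟨-, hne, -, -⟩ := hp
      have hconst : ∀ a, minor f p.1 p.2 a = a0 := by
        intro a
        apply h1
        refine ⟨p.1, p.2, hne, ?_⟩
        show Function.update a p.1 (a p.2) p.1 = Function.update a p.1 (a p.2) p.2
        rw [Function.update_self, Function.update_of_ne (Ne.symm hne)]
      suffices h : essCount (minor f p.1 p.2) = 0 by omega
      unfold essCount
      rw [Finset.card_eq_zero, Finset.filter_eq_empty_iff]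
      rintro i - ⟨a, b, hab⟩
      exact hab (by rw [hconst, hconst])
    rw [hgap, hS0]
    omega
end

section
/- Let 2 ≤ n ≤ k. The number of functions f : K^n → K with ess(f) = n and gap(f) = n equals k^(C(k,n)·n! + 1) − k, where C(k,n) is the binomial coefficient. -/
open scoped Classical

/-- A function with no essential variable is constant. -/
lemma constant_of_no_essential {n k : ℕ} (g : (Fin n → Fin k) → Fin k)
    (h : ∀ i, ¬ Essential g i) (a b : Fin n → Fin k) : g a = g b := by
  have key : ∀ s : Finset (Fin n), g (fun i => if i ∈ s then b i else a i) = g a := by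
    intro s
    induction s using Finset.induction with
    | empty => simp
    | @insert j s hj ih =>
      have heq : (fun i => if i ∈ insert j s then b i else a i)
          = Function.update (fun i => if i ∈ s then b i else a i) j (b j) := by
        funext i
        by_cases hij : i = j
        · subst hij; simp
        · simp [Function.update_of_ne hij, Finset.mem_insert, hij]
      rw [heq]
      have hne := h j
      simp only [Essential, not_exists, ne_eq, not_not] at hne
      rw [hne]
      exact ih
  have := key Finset.univ
  simpa using this.symm

lemma char_lemma {k n : ℕ} (hn : 2 ≤ n) (hk : 0 < k) (f : (Fin n → Fin k) → Fin k) :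
    (essCount f = n ∧ gap f = n) ↔
      ((∀ a : Fin n → Fin k, ¬ Function.Injective a → f a = f (fun _ => ⟨0, hk⟩)) ∧
        ¬ (∀ a, f a = f (fun _ => ⟨0, hk⟩))) := by
  set z : Fin n → Fin k := fun _ => ⟨0, hk⟩ with hz
  constructor
  · rintro ⟨hess, hgap⟩
    -- all variables essential
    have hall : ∀ i, Essential f i := by
      have hcard : (Finset.univ.filter (fun i => Essential f i)).card = Fintype.card (Fin n) := by
        rw [Fintype.card_fin]; exact hess
      have huniv := (Finset.card_eq_iff_eq_univ _).mp hcard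
      intro i
      have hm : i ∈ Finset.univ.filter (fun i => Essential f i) := by
        rw [huniv]; exact Finset.mem_univ i
      exact (Finset.mem_filter.mp hm).2
    -- sup of minors' essCounts is 0
    have hsup : Finset.sup
        (Finset.univ.filter
          (fun p : Fin n × Fin n => p.1 ≠ p.2 ∧ Essential f p.1 ∧ Essential f p.2))
        (fun p => essCount (minor f p.1 p.2)) = 0 := by
      unfold gap at hgap
      omega
    have hminor : ∀ i j : Fin n, i ≠ j → ∀ a b, minor f i j a = minor f i j b := by
      intro i j hij
      have hmem : (i, j) ∈ Finset.univ.filter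
          (fun p : Fin n × Fin n => p.1 ≠ p.2 ∧ Essential f p.1 ∧ Essential f p.2) := by
        simp [hij, hall]
      have hle := Finset.le_sup (f := fun p : Fin n × Fin n => essCount (minor f p.1 p.2)) hmem
      rw [hsup] at hle
      have h0 : (Finset.univ.filter (fun i' => Essential (minor f i j) i')).card = 0 :=
        Nat.le_zero.mp hle
      have hempty := Finset.card_eq_zero.mp h0
      have hno : ∀ i', ¬ Essential (minor f i j) i' := by
        intro i' hi'
        have hm : i' ∈ Finset.univ.filter (fun i' => Essential (minor f i j) i') := by
          simp [hi']
        rw [hempty] at hm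
        exact absurd hm (Finset.notMem_empty i')
      exact constant_of_no_essential _ hno
    constructor
    · intro a ha
      rw [Function.not_injective_iff] at ha
      obtain ⟨i, j, hval, hij⟩ := ha
      have h1 : f a = minor f i j a := by
        unfold minor
        rw [show Function.update a i (a j) = a from by rw [← hval]; exact Function.update_eq_self i a]
      have h2 : minor f i j z = f z := by
        unfold minor
        rw [show Function.update z i (z j) = z from Function.update_eq_self i z]
      rw [h1, hminor i j hij a z, h2]
    · intro hconst
      obtain ⟨a, b, hab⟩ := hall ⟨0, by omega⟩
      exact hab ((hconst _).trans (hconst a).symm)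
  · rintro ⟨hP, hnc⟩
    push_neg at hnc
    obtain ⟨a₀, ha₀⟩ := hnc
    -- every variable is essential
    have hall : ∀ i, Essential f i := by
      intro i
      obtain ⟨j, hj⟩ := Fintype.exists_ne_of_one_lt_card (by simp; omega) i
      refine ⟨a₀, a₀ j, ?_⟩
      have hni : ¬ Function.Injective (Function.update a₀ i (a₀ j)) := by
        intro hinj
        have : Function.update a₀ i (a₀ j) i = Function.update a₀ i (a₀ j) j := by
          rw [Function.update_self, Function.update_of_ne hj]
        exact hj (hinj this).symm
      rw [hP _ hni]
      exact fun h => ha₀ h.symm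
    have hess : essCount f = n := by
      unfold essCount
      rw [Finset.filter_true_of_mem (fun i _ => hall i)]
      simp
    refine ⟨hess, ?_⟩
    have hsup : Finset.sup
        (Finset.univ.filter
          (fun p : Fin n × Fin n => p.1 ≠ p.2 ∧ Essential f p.1 ∧ Essential f p.2))
        (fun p => essCount (minor f p.1 p.2)) = 0 := by
      rw [← Nat.le_zero]
      apply Finset.sup_le
      intro p hp
      have hij : p.1 ≠ p.2 := (Finset.mem_filter.mp hp).2.1
      -- the minor is constant, hence no essential variables
      have hconst : ∀ x, minor f p.1 p.2 x = f z := by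
        intro x
        unfold minor
        apply hP
        intro hinj
        have : Function.update x p.1 (x p.2) p.1 = Function.update x p.1 (x p.2) p.2 := by
          rw [Function.update_self, Function.update_of_ne hij.symm]
        exact hij (hinj this)
      have : Finset.univ.filter (fun i' => Essential (minor f p.1 p.2) i') = ∅ := by
        rw [Finset.filter_eq_empty_iff]
        rintro i' - ⟨x, v, hx⟩
        exact hx (by rw [hconst, hconst])
      unfold essCount
      rw [this]
      simp
    unfold gap
    rw [hsup, hess]
    omega

theorem card_gap_eq_n {k n : ℕ} (hn : 2 ≤ n) (hnk : n ≤ k) :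
    Fintype.card {f : (Fin n → Fin k) → Fin k // essCount f = n ∧ gap f = n} =
      k ^ (Nat.choose k n * Nat.factorial n + 1) - k := by
  have hk : 0 < k := by omega
  set z : Fin n → Fin k := fun _ => ⟨0, hk⟩ with hz
  have hzni : ¬ Function.Injective z := by
    intro hinj
    have : (⟨0, by omega⟩ : Fin n) = ⟨1, by omega⟩ := hinj rfl
    simp [Fin.ext_iff] at this
  -- rewrite the subtype via the characterization
  rw [Fintype.card_subtype]
  rw [Finset.filter_congr (fun f _ => char_lemma hn hk f)]
  set P : ((Fin n → Fin k) → Fin k) → Prop :=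
    fun f => ∀ a : Fin n → Fin k, ¬ Function.Injective a → f a = f z with hP
  set C : ((Fin n → Fin k) → Fin k) → Prop := fun f => ∀ a, f a = f z with hC
  -- split off the constant functions
  have hsplit := Finset.card_filter_add_card_filter_not
    (s := Finset.univ.filter P) C
  rw [Finset.filter_filter, Finset.filter_filter] at hsplit
  -- constants among P are exactly all constants
  have hPC : Finset.univ.filter (fun f => P f ∧ C f) = Finset.univ.filter C := by
    apply Finset.filter_congr
    intro f _
    constructor
    · exact fun h => h.2
    · exact fun h => ⟨fun a _ => h a, h⟩
  rw [hPC] at hsplit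
  -- there are k constant functions
  have hCcard : (Finset.univ.filter C).card = k := by
    rw [← Fintype.card_subtype]
    have e : {f : (Fin n → Fin k) → Fin k // C f} ≃ Fin k :=
      { toFun := fun f => f.1 z
        invFun := fun c => ⟨fun _ => c, fun _ => rfl⟩
        left_inv := by
          rintro ⟨f, hf⟩
          apply Subtype.ext
          funext a
          exact (hf a).symm
        right_inv := fun c => rfl }
    rw [Fintype.card_congr e, Fintype.card_fin]
  -- count the functions satisfying P
  have hPcard : (Finset.univ.filter P).card =
      k ^ (Nat.choose k n * Nat.factorial n + 1) := by
    rw [← Fintype.card_subtype]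
    have e : {f : (Fin n → Fin k) → Fin k // P f} ≃
        (({a : Fin n → Fin k // Function.Injective a} → Fin k) × Fin k) :=
      { toFun := fun f => (fun a => f.1 a.1, f.1 z)
        invFun := fun gc =>
          ⟨fun a => if h : Function.Injective a then gc.1 ⟨a, h⟩ else gc.2, by
            intro a ha
            simp only [dif_neg ha, dif_neg hzni]⟩
        left_inv := by
          rintro ⟨f, hf⟩
          apply Subtype.ext
          funext a
          by_cases h : Function.Injective a
          · simp only [dif_pos h]
          · simp only [dif_neg h]
            exact (hf a h).symm
        right_inv := by
          rintro ⟨g, c⟩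
          refine Prod.ext ?_ ?_
          · funext a
            simp only [dif_pos a.2]
          · simp only [dif_neg hzni] }
    rw [Fintype.card_congr e, Fintype.card_prod, Fintype.card_fun, Fintype.card_fin]
    have hI : Fintype.card {a : Fin n → Fin k // Function.Injective a} =
        Nat.choose k n * Nat.factorial n := by
      rw [Fintype.card_congr (Equiv.subtypeInjectiveEquivEmbedding (Fin n) (Fin k)),
        Fintype.card_embedding_eq, Fintype.card_fin, Fintype.card_fin,
        Nat.descFactorial_eq_factorial_mul_choose, mul_comm]
    rw [hI, pow_succ]
  rw [hCcard, hPcard] at hsplit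
  exact Nat.eq_sub_of_add_eq' hsplit
end

section
/- Let 2 < p < n ≤ k and let f : K^n → K depend essentially on all n variables. Then gap(f) = p if and only if f = h ⊕ g (addition modulo k pointwise), where h depends essentially on exactly n − p variables, g depends essentially on all n variables, and every identification minor g_{i←j} (i ≠ j) is identically zero. -/
open scoped Classical

namespace GapAux

open Finset Function

variable {k n : ℕ}

lemma not_essential_iff {f : (Fin n → Fin k) → Fin k} {i : Fin n} :
    ¬ Essential f i ↔ ∀ a b, f (Function.update a i b) = f a := by
  unfold Essential; push_neg; rfl

lemma minor_eq_of_not_essential {f : (Fin n → Fin k) → Fin k} {i j : Fin n}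
    (h : ¬ Essential f i) : minor f i j = f :=
  funext fun a => (not_essential_iff.mp h) a (a j)

lemma minor_apply_of_eq {f : (Fin n → Fin k) → Fin k} {i j : Fin n} {a : Fin n → Fin k}
    (hij : a i = a j) : minor f i j a = f a := by
  unfold minor; rw [← hij, Function.update_eq_self]

/-- essential set -/
noncomputable def essSet (f : (Fin n → Fin k) → Fin k) : Finset (Fin n) :=
  Finset.univ.filter (fun i => Essential f i)

lemma essCount_def (f : (Fin n → Fin k) → Fin k) : essCount f = (essSet f).card := rfl

lemma essCount_le (f : (Fin n → Fin k) → Fin k) : essCount f ≤ n := by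
  calc essCount f ≤ (Finset.univ : Finset (Fin n)).card := Finset.card_filter_le _ _
  _ = n := by simp

/-- the minor does not depend on coordinate i -/
lemma minor_not_essential_self (f : (Fin n → Fin k) → Fin k) {i j : Fin n} (hij : i ≠ j) :
    ¬ Essential (minor f i j) i := by
  rw [not_essential_iff]
  intro a b
  unfold minor
  rw [Function.update_of_ne hij.symm, Function.update_idem]

/-- if l ∉ {i,j} is essential in the minor then it is essential in f -/
lemma essential_of_minor {f : (Fin n → Fin k) → Fin k} {i j l : Fin n} (hij : i ≠ j)
    (hli : l ≠ i) (hlj : l ≠ j) (h : Essential (minor f i j) l) : Essential f l := by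
  obtain ⟨a, b, hab⟩ := h
  refine ⟨Function.update a i (a j), b, ?_⟩
  unfold minor at hab
  rw [Function.update_of_ne (Ne.symm hlj)] at hab
  rwa [Function.update_comm hli] at hab

lemma essCount_minor_le (f : (Fin n → Fin k) → Fin k) {i j : Fin n} (hij : i ≠ j) :
    essCount (minor f i j) ≤ essCount f := by
  by_cases hi : Essential f i
  · rw [essCount_def, essCount_def]
    have hsub : essSet (minor f i j) ⊆ insert j ((essSet f).erase i) := by
      intro l hl
      rw [essSet, Finset.mem_filter] at hl
      obtain ⟨-, hl⟩ := hl
      by_cases hlj : l = j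
      · simp [hlj]
      · have hli : l ≠ i := by
          rintro rfl; exact minor_not_essential_self f hij hl
        have : Essential f l := essential_of_minor hij hli hlj hl
        rw [Finset.mem_insert]
        right
        rw [Finset.mem_erase]
        exact ⟨hli, by rw [essSet, Finset.mem_filter]; exact ⟨Finset.mem_univ _, this⟩⟩
    calc (essSet (minor f i j)).card ≤ (insert j ((essSet f).erase i)).card :=
          Finset.card_le_card hsub
      _ ≤ ((essSet f).erase i).card + 1 := Finset.card_insert_le _ _
      _ = (essSet f).card - 1 + 1 := by
          rw [Finset.card_erase_of_mem]
          rw [essSet, Finset.mem_filter]; exact ⟨Finset.mem_univ _, hi⟩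
      _ ≤ (essSet f).card := by
          have : 1 ≤ (essSet f).card := by
            rw [Nat.one_le_iff_ne_zero, ← Nat.pos_iff_ne_zero, Finset.card_pos]
            exact ⟨i, by rw [essSet, Finset.mem_filter]; exact ⟨Finset.mem_univ _, hi⟩⟩
          omega
  · rw [minor_eq_of_not_essential hi]

section Machinery

variable (f : (Fin n → Fin k) → Fin k)

/-- `Dep i j l`: the restriction of `f` to the diagonal `aᵢ = aⱼ` depends on coordinate `l`. -/
def Dep (i j l : Fin n) : Prop :=
  i ≠ j ∧ l ≠ i ∧ l ≠ j ∧ ∃ a b, a i = a j ∧ f (Function.update a l b) ≠ f a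

/-- `l` is covered: some diagonal restriction depends on it. -/
def COV (l : Fin n) : Prop := ∃ i j, Dep f i j l

/-- `x` is anchored at `g`. -/
def Anch (g x : Fin n) : Prop := x ≠ g ∧ ∀ τ, τ ≠ g → τ ≠ x → Dep f g τ x

noncomputable def DepSet (i j : Fin n) : Finset (Fin n) :=
  Finset.univ.filter (fun l => Dep f i j l)

noncomputable def Bset (g : Fin n) : Finset (Fin n) :=
  Finset.univ.filter (fun x => Anch f g x)

variable {f}

lemma Dep.symm {i j l : Fin n} (h : Dep f i j l) : Dep f j i l := by
  obtain ⟨hij, hli, hlj, a, b, hab, hne⟩ := h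
  exact ⟨hij.symm, hlj, hli, a, b, hab.symm, hne⟩

lemma Dep.essential_minor {i j l : Fin n} (h : Dep f i j l) :
    Essential (minor f i j) l := by
  obtain ⟨hij, hli, hlj, a, b, hab, hne⟩ := h
  refine ⟨a, b, ?_⟩
  rw [minor_apply_of_eq hab, minor_apply_of_eq ?_]
  · exact hne
  · rw [Function.update_of_ne (Ne.symm hli), Function.update_of_ne (Ne.symm hlj), hab]

lemma depSet_subset {i j : Fin n} : DepSet f i j ⊆ essSet (minor f i j) := by
  intro l hl
  rw [DepSet, Finset.mem_filter] at hl
  rw [essSet, Finset.mem_filter]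
  exact ⟨Finset.mem_univ _, hl.2.essential_minor⟩

lemma depSet_card_le (HB : ∀ i j : Fin n, i ≠ j → essCount (minor f i j) ≤ n - 3)
    {i j : Fin n} (hij : i ≠ j) : (DepSet f i j).card ≤ n - 3 :=
  le_trans (Finset.card_le_card depSet_subset) (HB i j hij)

/-- there is a coordinate free for the pair (i,j) -/
lemma exists_free (hn : 4 ≤ n) (HB : ∀ i j : Fin n, i ≠ j → essCount (minor f i j) ≤ n - 3)
    {i j : Fin n} (hij : i ≠ j) :
    ∃ g, g ≠ i ∧ g ≠ j ∧ ¬ Dep f i j g := by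
  by_contra hcon
  push_neg at hcon
  have hsub : (Finset.univ : Finset (Fin n)) ⊆ insert i (insert j (DepSet f i j)) := by
    intro g _
    by_cases hgi : g = i
    · simp [hgi]
    · by_cases hgj : g = j
      · simp [hgj]
      · have := hcon g hgi hgj
        simp only [Finset.mem_insert]
        right; right
        rw [DepSet, Finset.mem_filter]; exact ⟨Finset.mem_univ _, this⟩
  have hcard := Finset.card_le_card hsub
  simp only [Finset.card_univ, Fintype.card_fin] at hcard
  have h1 := Finset.card_insert_le i (insert j (DepSet f i j))
  have h2 := Finset.card_insert_le j (DepSet f i j)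
  have h3 := depSet_card_le HB hij
  omega

/-- freeness gives invariance of `f` on the diagonal. -/
lemma free_invariant {i j g : Fin n} (hij : i ≠ j) (hgi : g ≠ i) (hgj : g ≠ j)
    (hfree : ¬ Dep f i j g) {a : Fin n → Fin k} (ha : a i = a j) (b : Fin k) :
    f (Function.update a g b) = f a := by
  by_contra hne
  exact hfree ⟨hij, hgi, hgj, a, b, ha, hne⟩

/-- P1: propagation of dependence to anchors. -/
lemma anch_of_dep_free {σ τ x g : Fin n} (hd : Dep f σ τ x)
    (hgσ : g ≠ σ) (hgτ : g ≠ τ) (hfree : ¬ Dep f σ τ g) (hgx : g ≠ x) :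
    Anch f g x := by
  obtain ⟨hστ, hxσ, hxτ, a, b, ha, hne⟩ := hd
  refine ⟨Ne.symm hgx, ?_⟩
  intro τ' hτ'g hτ'x
  set Q := Function.update a g (a τ') with hQ
  have hQg : Q g = a τ' := Function.update_self _ _ _
  have hQτ' : Q τ' = a τ' := Function.update_of_ne hτ'g _ _
  have hfQ : f Q = f a := free_invariant hστ hgσ hgτ hfree ha _
  set A := Function.update a x b with hA
  have hAσ : A σ = a σ := Function.update_of_ne (Ne.symm hxσ) _ _
  have hAτ : A τ = a τ := Function.update_of_ne (Ne.symm hxτ) _ _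
  have hfQ' : f (Function.update A g (a τ')) = f A := by
    refine free_invariant hστ hgσ hgτ hfree ?_ _
    rw [hAσ, hAτ, ha]
  have hcomm : Function.update A g (a τ') = Function.update Q x b := by
    rw [hA, hQ, Function.update_comm hgx.symm]
  refine ⟨Ne.symm hτ'g, Ne.symm hgx, Ne.symm hτ'x, Q, b, ?_, ?_⟩
  · rw [hQg, hQτ']
  · rw [← hcomm, hfQ', hfQ]
    exact hne

lemma mem_bset {g x : Fin n} : x ∈ Bset f g ↔ Anch f g x := by
  rw [Bset, Finset.mem_filter]
  exact ⟨fun h => h.2, fun h => ⟨Finset.mem_univ _, h⟩⟩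

lemma bset_card_le (hn : 4 ≤ n) (HB : ∀ i j : Fin n, i ≠ j → essCount (minor f i j) ≤ n - 3)
    (g : Fin n) : (Bset f g).card ≤ n - 2 := by
  have h2n : 2 ≤ n := by omega
  obtain ⟨τ₁, hτ₁⟩ : ∃ τ₁ : Fin n, τ₁ ≠ g := by
    refine ⟨if g = ⟨0, by omega⟩ then ⟨1, by omega⟩ else ⟨0, by omega⟩, ?_⟩
    split <;> simp_all <;> intro h <;> simp [h] at * <;> omega
  have hsub : Bset f g ⊆ insert τ₁ (DepSet f g τ₁) := by
    intro x hx
    rw [mem_bset] at hx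
    by_cases hxτ : x = τ₁
    · simp [hxτ]
    · rw [Finset.mem_insert, DepSet, Finset.mem_filter]
      exact Or.inr ⟨Finset.mem_univ _, hx.2 τ₁ hτ₁ (fun h => hxτ (h.symm ▸ rfl))⟩
  have h1 := Finset.card_le_card hsub
  have h2 := Finset.card_insert_le τ₁ (DepSet f g τ₁)
  have h3 : g ≠ τ₁ := Ne.symm hτ₁
  have h4 := depSet_card_le HB h3
  omega

lemma grow {g τ₀ g' : Fin n} (hτ₀B : τ₀ ∉ Bset f g) (hτ₀g : τ₀ ≠ g)
    (hg'g : g' ≠ g) (hg'τ₀ : g' ≠ τ₀) (hfree : ¬ Dep f g τ₀ g') :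
    Bset f g ⊆ Bset f g' := by
  intro x hx
  have hAx : Anch f g x := mem_bset.mp hx
  have hτ₀x : τ₀ ≠ x := fun h => hτ₀B (h ▸ hx)
  have hdep : Dep f g τ₀ x := hAx.2 τ₀ hτ₀g hτ₀x
  have hg'x : g' ≠ x := fun h => hfree (h ▸ hdep)
  exact mem_bset.mpr (anch_of_dep_free hdep hg'g hg'τ₀ hfree hg'x)

theorem exists_three_good (hn : 4 ≤ n)
    (HB : ∀ i j : Fin n, i ≠ j → essCount (minor f i j) ≤ n - 3) :
    3 ≤ (Finset.univ.filter (fun c => ¬ COV f c)).card := by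
  by_cases hcov : ∃ x, COV f x
  swap
  · push_neg at hcov
    have : (Finset.univ.filter (fun c => ¬ COV f c)) = Finset.univ :=
      Finset.filter_true_of_mem (fun c _ => hcov c)
    rw [this]
    simp only [Finset.card_univ, Fintype.card_fin]
    omega
  obtain ⟨x₀, σ₀, τ₀, hd₀⟩ := hcov
  have hστ₀ : σ₀ ≠ τ₀ := hd₀.1
  obtain ⟨g₀, hg₀σ, hg₀τ, hg₀f⟩ := exists_free hn HB hστ₀
  have hg₀x : g₀ ≠ x₀ := fun h => hg₀f (h ▸ hd₀)
  have hx₀B : x₀ ∈ Bset f g₀ := mem_bset.mpr (anch_of_dep_free hd₀ hg₀σ hg₀τ hg₀f hg₀x)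
  -- maximal B-system
  obtain ⟨gm, -, hmax⟩ := Finset.exists_max_image (Finset.univ : Finset (Fin n))
    (fun g => (Bset f g).card) ⟨g₀, Finset.mem_univ _⟩
  set C := Bset f gm with hC
  have hCne : C.Nonempty := by
    rw [← Finset.card_pos]
    have h1 : 0 < (Bset f g₀).card := Finset.card_pos.mpr ⟨x₀, hx₀B⟩
    have := hmax g₀ (Finset.mem_univ _)
    omega
  set W := Finset.univ.filter (fun g' => C ⊆ Bset f g') with hW
  have hWmem : ∀ g', g' ∈ W ↔ C ⊆ Bset f g' := by
    intro g'; rw [hW, Finset.mem_filter]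
    exact ⟨fun h => h.2, fun h => ⟨Finset.mem_univ _, h⟩⟩
  have hWeq : ∀ g' ∈ W, Bset f g' = C := by
    intro g' hg'
    refine (Finset.eq_of_subset_of_card_le ((hWmem g').mp hg') ?_).symm
    exact hmax g' (Finset.mem_univ _)
  have hgmW : gm ∈ W := (hWmem gm).mpr subset_rfl
  -- closure
  have hclose : ∀ g' ∈ W, ∀ τ, τ ∉ C → τ ≠ g' →
      ∀ g'', g'' ≠ g' → g'' ≠ τ → ¬ Dep f g' τ g'' → g'' ∈ W := by
    intro g' hg' τ hτC hτg' g'' h1 h2 h3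
    refine (hWmem g'').mpr ?_
    have : Bset f g' ⊆ Bset f g'' := grow (by rw [hWeq g' hg']; exact hτC) hτg' h1 h2 h3
    rw [hWeq g' hg'] at this
    exact this
  -- step 3
  have hstep3 : ∀ g' ∈ W, ∀ τ, τ ∉ C → τ ≠ g' →
      ∀ x, x ∉ W → x ≠ g' → x ≠ τ → x ∈ C := by
    intro g' hg' τ hτC hτg' x hxW hxg' hxτ
    have hg'τ : g' ≠ τ := Ne.symm hτg'
    have hdep : Dep f g' τ x := by
      by_contra hnd
      exact hxW (hclose g' hg' τ hτC hτg' x hxg' hxτ hnd)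
    obtain ⟨g₂, hg₂a, hg₂b, hg₂f⟩ := exists_free hn HB hg'τ
    have hg₂W : g₂ ∈ W := hclose g' hg' τ hτC hτg' g₂ hg₂a hg₂b hg₂f
    have hg₂x : g₂ ≠ x := fun h => (h ▸ hg₂f) hdep
    have := mem_bset.mpr (anch_of_dep_free hdep hg₂a hg₂b hg₂f hg₂x)
    rw [hWeq g₂ hg₂W] at this
    exact this
  -- W and C disjoint
  have hWC : ∀ c, c ∈ W → c ∈ C → False := by
    intro c hcW hcC
    have : c ∈ Bset f c := by rw [hWeq c hcW]; exact hcC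
    exact (mem_bset.mp this).1 rfl
  -- |W| ≥ 2
  have hW2 : 2 ≤ W.card := by
    by_contra hlt
    push_neg at hlt
    have hWsing : ∀ w ∈ W, w = gm := by
      intro w hw
      by_contra hne
      have : ({w, gm} : Finset (Fin n)) ⊆ W := by
        intro z hz
        simp only [Finset.mem_insert, Finset.mem_singleton] at hz
        rcases hz with rfl | rfl
        exacts [hw, hgmW]
      have hcard2 : ({w, gm} : Finset (Fin n)).card = 2 := Finset.card_pair hne
      have := Finset.card_le_card this
      omega
    set R := Finset.univ \ (W ∪ C) with hR
    have hRW : ∀ r ∈ R, r ∉ W := by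
      intro r hr
      rw [hR, Finset.mem_sdiff] at hr
      intro h; exact hr.2 (Finset.mem_union_left _ h)
    have hRC : ∀ r ∈ R, r ∉ C := by
      intro r hr
      rw [hR, Finset.mem_sdiff] at hr
      intro h; exact hr.2 (Finset.mem_union_right _ h)
    by_cases hR2 : 2 ≤ R.card
    · obtain ⟨τ₁, hτ₁, τ₂, hτ₂, hτne⟩ := Finset.one_lt_card.mp hR2
      have hτ₁gm : τ₁ ≠ gm := fun h => hRW τ₁ hτ₁ (h ▸ hgmW)
      have hτ₂gm : τ₂ ≠ gm := fun h => hRW τ₂ hτ₂ (h ▸ hgmW)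
      have := hstep3 gm hgmW τ₁ (hRC τ₁ hτ₁) hτ₁gm τ₂ (hRW τ₂ hτ₂) hτ₂gm (Ne.symm hτne)
      exact hRC τ₂ hτ₂ this
    · -- R.card ≤ 1
      have hcards : W.card + C.card + R.card = n := by
        have h1 : (W ∪ C) ∪ R = Finset.univ := by
          rw [hR]
          rw [Finset.union_sdiff_of_subset (Finset.subset_univ _)]
        have h2 : Disjoint W C := by
          rw [Finset.disjoint_left]
          intro a ha hb; exact hWC a ha hb
        have h3 : Disjoint (W ∪ C) R := by
          rw [hR]
          exact Finset.disjoint_sdiff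
        have := Finset.card_union_of_disjoint h3
        rw [h1] at this
        rw [Finset.card_union_of_disjoint h2] at this
        simp only [Finset.card_univ, Fintype.card_fin] at this
        omega
      have hWcard : W.card = 1 := by
        have : 0 < W.card := Finset.card_pos.mpr ⟨gm, hgmW⟩
        omega
      have hBle := bset_card_le hn HB gm
      rw [← hC] at hBle
      by_cases hR0 : R.card = 0
      · omega
      · -- R = {t*}
        have hR1 : R.card = 1 := by omega
        obtain ⟨tstar, hts⟩ := Finset.card_eq_one.mp hR1
        have htsR : tstar ∈ R := by rw [hts]; exact Finset.mem_singleton_self _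
        have htsgm : tstar ≠ gm := fun h => hRW tstar htsR (h ▸ hgmW)
        have hsub : C ⊆ DepSet f gm tstar := by
          intro x hxC
          have hAx : Anch f gm x := mem_bset.mp hxC
          have htsx : tstar ≠ x := fun h => hRC tstar htsR (h ▸ hxC)
          rw [DepSet, Finset.mem_filter]
          exact ⟨Finset.mem_univ _, hAx.2 tstar htsgm htsx⟩
        have := Finset.card_le_card hsub
        have hge : gm ≠ tstar := Ne.symm htsgm
        have := depSet_card_le HB hge
        omega
  -- R = ∅ : univ = W ∪ C
  have huniv : ∀ x : Fin n, x ∈ W ∨ x ∈ C := by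
    intro x
    by_cases hxW : x ∈ W
    · exact Or.inl hxW
    by_cases hxC : x ∈ C
    · exact Or.inr hxC
    exfalso
    obtain ⟨τw, hτw, hτwne⟩ : ∃ τw ∈ W, τw ≠ gm := by
      obtain ⟨a, ha, b, hb, hne⟩ := Finset.one_lt_card.mp hW2
      by_cases hagm : a = gm
      · exact ⟨b, hb, fun h => hne (by rw [hagm, h])⟩
      · exact ⟨a, ha, hagm⟩
    have hτwC : τw ∉ C := fun h => hWC τw hτw h
    have hxgm : x ≠ gm := fun h => hxW (h ▸ hgmW)
    have hxτw : x ≠ τw := fun h => hxW (h ▸ hτw)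
    exact hxC (hstep3 gm hgmW τw hτwC hτwne x hxW hxgm hxτw)
  -- |C| ≤ n - 3
  have hCcard : C.card ≤ n - 3 := by
    obtain ⟨a, ha, b, hb, hne⟩ := Finset.one_lt_card.mp hW2
    have hsub : C ⊆ DepSet f a b := by
      intro x hxC
      have hAx : Anch f a x := mem_bset.mp (by rw [hWeq a ha]; exact hxC)
      have hbx : b ≠ x := fun h => hWC b hb (h ▸ hxC)
      rw [DepSet, Finset.mem_filter]
      exact ⟨Finset.mem_univ _, hAx.2 b (Ne.symm hne) hbx⟩
    exact le_trans (Finset.card_le_card hsub) (depSet_card_le HB hne)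
  -- W consists of good coordinates
  have hWgood : ∀ c ∈ W, ¬ COV f c := by
    intro cs hcsW hCOV
    obtain ⟨σ, τ, hd⟩ := hCOV
    obtain ⟨h₁, h₁a, h₁b, h₁f⟩ := exists_free hn HB hd.1
    have hh₁cs : h₁ ≠ cs := fun h => h₁f (h ▸ hd)
    have hcsB : cs ∈ Bset f h₁ := mem_bset.mpr (anch_of_dep_free hd h₁a h₁b h₁f hh₁cs)
    rcases huniv h₁ with hh₁W | hh₁C
    · rw [hWeq h₁ hh₁W] at hcsB
      exact hWC cs hcsW hcsB
    · -- h₁ ∈ C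
      obtain ⟨g, hgW, hgcs⟩ : ∃ g ∈ W, g ≠ cs := by
        obtain ⟨a, ha, b, hb, hne⟩ := Finset.one_lt_card.mp hW2
        by_cases hacs : a = cs
        · exact ⟨b, hb, fun h => hne (by rw [hacs, h])⟩
        · exact ⟨a, ha, hacs⟩
      have hgh₁ : g ≠ h₁ := fun h => hWC g hgW (h ▸ hh₁C)
      have hAcs : Anch f h₁ cs := mem_bset.mp hcsB
      have hdep1 : Dep f h₁ g cs := hAcs.2 g hgh₁ hgcs
      have hdep2 : Dep f g h₁ cs := hdep1.symm
      -- DepSet g h₁ contains C.erase h₁ and cs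
      obtain ⟨g₃, hg₃a, hg₃b, hg₃f⟩ := exists_free hn HB hgh₁
      have hg₃cs : g₃ ≠ cs := fun h => hg₃f (h ▸ hdep2)
      have hg₃C : g₃ ∉ C := by
        intro hg₃C
        have hA : Anch f g g₃ := mem_bset.mp (by rw [hWeq g hgW]; exact hg₃C)
        exact hg₃f (hA.2 h₁ (Ne.symm hgh₁) (Ne.symm hg₃b))
      have hg₃W : g₃ ∈ W := (huniv g₃).resolve_right hg₃C
      have := mem_bset.mpr (anch_of_dep_free hdep2 hg₃a hg₃b hg₃f hg₃cs)
      rw [hWeq g₃ hg₃W] at this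
      exact hWC cs hcsW this
  -- conclude
  have hsubW : W ⊆ Finset.univ.filter (fun c => ¬ COV f c) := by
    intro c hc
    rw [Finset.mem_filter]
    exact ⟨Finset.mem_univ _, hWgood c hc⟩
  have hWcard3 : 3 ≤ W.card := by
    have hdisj : Disjoint W C := by
      rw [Finset.disjoint_left]
      intro a ha hb; exact hWC a ha hb
    have hcup : W ∪ C = Finset.univ := by
      apply Finset.eq_univ_of_forall
      intro x
      rcases huniv x with h | h
      exacts [Finset.mem_union_left _ h, Finset.mem_union_right _ h]
    have := Finset.card_union_of_disjoint hdisj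
    rw [hcup] at this
    simp only [Finset.card_univ, Fintype.card_fin] at this
    omega
  exact le_trans hWcard3 (Finset.card_le_card hsubW)

/-- `a` has a repeated entry. -/
def HasRep (a : Fin n → Fin k) : Prop := ∃ s t, s ≠ t ∧ a s = a t

/-- the restriction of `f` to tuples with repetitions depends on coordinate `c`. -/
def Sdep (f : (Fin n → Fin k) → Fin k) (c : Fin n) : Prop :=
  ∃ a b, HasRep a ∧ HasRep (Function.update a c b) ∧ f (Function.update a c b) ≠ f a

lemma good_move {e : Fin n} (he : ¬ COV f e) {a' : Fin n → Fin k} {s t : Fin n}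
    (hst : s ≠ t) (hes : e ≠ s) (het : e ≠ t) (hcol : a' s = a' t) (b' : Fin k) :
    f (Function.update a' e b') = f a' := by
  by_contra h
  exact he ⟨s, t, hst, hes, het, a', b', hcol, h⟩

lemma not_sdep_of_good (hn : 4 ≤ n)
    (HB : ∀ i j : Fin n, i ≠ j → essCount (minor f i j) ≤ n - 3)
    {c : Fin n} (hc : ¬ COV f c) : ¬ Sdep f c := by
  rintro ⟨a, b, hRa, hRy, hne⟩
  set y := Function.update a c b with hy
  -- Case 1: a has a repetition avoiding c
  by_cases h1 : ∃ s t, s ≠ t ∧ c ≠ s ∧ c ≠ t ∧ a s = a t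
  · obtain ⟨s, t, hst, hcs, hct, hcol⟩ := h1
    exact hc ⟨s, t, hst, hcs, hct, a, b, hcol, hne⟩
  by_cases h2 : ∃ s t, s ≠ t ∧ c ≠ s ∧ c ≠ t ∧ y s = y t
  · obtain ⟨s, t, hst, hcs, hct, hcol⟩ := h2
    refine hc ⟨s, t, hst, hcs, hct, y, a c, hcol, ?_⟩
    have : Function.update y c (a c) = a := by
      rw [hy, Function.update_idem, Function.update_eq_self]
    rw [this]
    exact fun h => hne h.symm
  push_neg at h1 h2
  -- extract i with a i = a c
  obtain ⟨i, hic, hi_eq⟩ : ∃ i, i ≠ c ∧ a i = a c := by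
    obtain ⟨s, t, hst, hcol⟩ := hRa
    by_cases hcs : c = s
    · exact ⟨t, fun h => hst (hcs.symm.trans h.symm), by rw [← hcs] at hcol; exact hcol.symm⟩
    · by_cases hct : c = t
      · exact ⟨s, fun h => hst (h.trans hct), by rw [← hct] at hcol; exact hcol⟩
      · exact absurd hcol (h1 s t hst hcs hct)
  obtain ⟨i', hi'c, hi'_eq⟩ : ∃ i', i' ≠ c ∧ y i' = b := by
    obtain ⟨s, t, hst, hcol⟩ := hRy
    by_cases hcs : c = s
    · refine ⟨t, fun h => hst (hcs.symm.trans h.symm), ?_⟩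
      rw [← hcs] at hcol
      rw [← hcol, hy, Function.update_self]
    · by_cases hct : c = t
      · refine ⟨s, fun h => hst (h.trans hct), ?_⟩
        rw [← hct] at hcol
        rw [hcol, hy, Function.update_self]
      · exact absurd hcol (h2 s t hst hcs hct)
  have hai' : a i' = b := by
    rw [← hi'_eq, hy, Function.update_of_ne hi'c]
  have hpq : a c ≠ b := by
    intro h
    apply hne
    rw [hy, ← h, Function.update_eq_self]
  have hii' : i ≠ i' := by
    intro h
    rw [h, hai'] at hi_eq
    exact hpq hi_eq.symm
  -- good coordinates
  set T := Finset.univ.filter (fun c' => ¬ COV f c') with hT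
  have hT3 : 3 ≤ T.card := exists_three_good hn HB
  by_cases hEdge : ¬ COV f i ∧ ¬ COV f i'
  · -- EDGE chain
    obtain ⟨hgi, hgi'⟩ := hEdge
    obtain ⟨d, hd⟩ : ∃ d : Fin n, d ∉ ({c, i, i'} : Finset (Fin n)) := by
      by_contra hcon
      push_neg at hcon
      have : (Finset.univ : Finset (Fin n)) ⊆ {c, i, i'} := fun z _ => hcon z
      have h1' := Finset.card_le_card this
      have h2' : ({c, i, i'} : Finset (Fin n)).card ≤ 3 := by
        apply le_trans (Finset.card_insert_le _ _)
        have := Finset.card_insert_le i ({i'} : Finset (Fin n))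
        simp at this ⊢
        omega
      simp only [Finset.card_univ, Fintype.card_fin] at h1'
      omega
    simp only [Finset.mem_insert, Finset.mem_singleton, not_or] at hd
    obtain ⟨hdc, hdi, hdi'⟩ := hd
    set w := a d with hw
    set P₁ := Function.update a i' w with hP₁
    have e₁ : f P₁ = f a :=
      good_move hgi' (Ne.symm hic) hi'c (Ne.symm hii') (by rw [hi_eq]) w
    set P₂ := Function.update P₁ c b with hP₂
    have hP₁i' : P₁ i' = w := Function.update_self _ _ _
    have hP₁d : P₁ d = w := by rw [hP₁, Function.update_of_ne hdi']
    have e₂ : f P₂ = f P₁ :=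
      good_move hc (fun h => hdi' h.symm) (fun h => hi'c h.symm) (fun h => hdc h.symm) (by rw [hP₁i', hP₁d]) b
    set P₃ := Function.update P₂ i b with hP₃
    have hP₂i' : P₂ i' = w := by
      rw [hP₂, Function.update_of_ne (fun h => hi'c h)]
      exact hP₁i'
    have hP₂d : P₂ d = w := by
      rw [hP₂, Function.update_of_ne (fun h => hdc h)]
      exact hP₁d
    have e₃ : f P₃ = f P₂ :=
      good_move hgi (fun h => hdi' h.symm) hii' (fun h => hdi h.symm)
        (by rw [hP₂i', hP₂d]) b
    set P₄ := Function.update P₃ i' b with hP₄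
    have hP₃c : P₃ c = b := by
      rw [hP₃, Function.update_of_ne (fun h => hic h.symm), hP₂, Function.update_self]
    have hP₃i : P₃ i = b := Function.update_self _ _ _
    have e₄ : f P₄ = f P₃ :=
      good_move hgi' hic.symm hi'c (Ne.symm hii') (by rw [hP₃c, hP₃i]) b
    set P₅ := Function.update P₄ i (a i) with hP₅
    have hP₄c : P₄ c = b := by
      rw [hP₄, Function.update_of_ne (fun h => hi'c h.symm)]
      exact hP₃c
    have hP₄i' : P₄ i' = b := Function.update_self _ _ _
    have e₅ : f P₅ = f P₄ :=
      good_move hgi (fun h => hi'c h.symm) hic hii' (by rw [hP₄c, hP₄i']) (a i)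
    have hP₅y : P₅ = y := by
      funext z
      by_cases hzi : z = i
      · subst hzi
        rw [hP₅, Function.update_self, hy, Function.update_of_ne hic]
      · rw [hP₅, Function.update_of_ne hzi]
        by_cases hzi' : z = i'
        · subst hzi'
          rw [hP₄, Function.update_self, hy, Function.update_of_ne hi'c, hai']
        · rw [hP₄, Function.update_of_ne hzi']
          by_cases hzc : z = c
          · subst hzc
            rw [hP₃, Function.update_of_ne (fun h => hic h.symm), hP₂,
              Function.update_self, hy, Function.update_self]
          · rw [hP₃, Function.update_of_ne hzi, hP₂, Function.update_of_ne hzc,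
              hP₁, Function.update_of_ne hzi', hy, Function.update_of_ne hzc]
    rw [← hP₅y] at hne
    rw [e₅, e₄, e₃, e₂, e₁] at hne
    exact hne rfl
  · -- MAIN chain
    rw [not_and_or, not_not, not_not] at hEdge
    obtain ⟨e, heT, hedist⟩ : ∃ e, ¬ COV f e ∧ e ∉ ({c, i, i'} : Finset (Fin n)) := by
      have hbadsub : ¬ (T ⊆ ({c, i, i'} : Finset (Fin n))) := by
        intro hsub
        have hcard3 : ({c, i, i'} : Finset (Fin n)).card ≤ 3 := by
          apply le_trans (Finset.card_insert_le _ _)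
          have h5 := Finset.card_insert_le i ({i'} : Finset (Fin n))
          simp only [Finset.card_singleton] at h5
          omega
        have hTeq : T = ({c, i, i'} : Finset (Fin n)) :=
          Finset.eq_of_subset_of_card_le hsub (by omega)
        have hiT : i ∈ T := by rw [hTeq]; simp
        have hi'T : i' ∈ T := by rw [hTeq]; simp
        rw [hT, Finset.mem_filter] at hiT hi'T
        rcases hEdge with h | h
        exacts [hiT.2 h, hi'T.2 h]
      obtain ⟨e, heT, hnot⟩ := Finset.not_subset.mp hbadsub
      rw [hT, Finset.mem_filter] at heT
      exact ⟨e, heT.2, hnot⟩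
    simp only [Finset.mem_insert, Finset.mem_singleton, not_or] at hedist
    obtain ⟨hec, hei, hei'⟩ := hedist
    set x₁ := Function.update a e (a c) with hx₁
    have e₁ : f x₁ = f a :=
      good_move heT (fun h => hic h.symm) hec hei (hi_eq.symm) (a c)
    set x₂ := Function.update x₁ c b with hx₂
    have hx₁e : x₁ e = a c := Function.update_self _ _ _
    have hx₁i : x₁ i = a c := by rw [hx₁, Function.update_of_ne (fun h => hei h.symm)]; exact hi_eq
    have e₂ : f x₂ = f x₁ :=
      good_move hc hei (fun h => hec h.symm) (fun h => hic h.symm) (by rw [hx₁e, hx₁i]) b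
    have hx₂y : x₂ = Function.update y e (a c) := by
      rw [hx₂, hx₁, hy, Function.update_comm (fun h => hec h.symm)]
    have e₃ : f x₂ = f y := by
      rw [hx₂y]
      refine good_move heT (fun h => hi'c h.symm) hec hei' ?_ (a c)
      rw [hy, Function.update_self, Function.update_of_ne hi'c, hai']
    rw [e₃] at e₂
    rw [e₂, e₁] at hne  -- check direction
    exact hne rfl

lemma not_sdep_invariant {c : Fin n} (hc : ¬ Sdep f c) {a : Fin n → Fin k} (b : Fin k)
    (hRa : HasRep a) (hRb : HasRep (Function.update a c b)) :
    f (Function.update a c b) = f a := by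
  by_contra h
  exact hc ⟨a, b, hRa, hRb, h⟩

/-- transfer: any Sub-dependent coordinate is essential in the minor of a pair
of Sub-independent coordinates. -/
lemma sdep_transfer {i₀ j₀ : Fin n} (hij : i₀ ≠ j₀) (hi : ¬ Sdep f i₀) (hj : ¬ Sdep f j₀)
    {l : Fin n} (hl : Sdep f l) : Essential (minor f i₀ j₀) l := by
  have hli : l ≠ i₀ := fun h => hi (h ▸ hl)
  have hlj : l ≠ j₀ := fun h => hj (h ▸ hl)
  obtain ⟨x, b, hRx, hRy, hne⟩ := hl
  set y := Function.update x l b with hy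
  set x' := Function.update x i₀ (x j₀) with hx'
  have hRx' : HasRep x' := ⟨i₀, j₀, hij, by
    rw [hx', Function.update_self, Function.update_of_ne (Ne.symm hij)]⟩
  have hfx' : f x' = f x := not_sdep_invariant hi (x j₀) hRx hRx'
  set y' := Function.update y i₀ (y j₀) with hy'
  have hRy' : HasRep y' := ⟨i₀, j₀, hij, by
    rw [hy', Function.update_self, Function.update_of_ne (Ne.symm hij)]⟩
  have hfy' : f y' = f y := not_sdep_invariant hi (y j₀) hRy hRy'
  have hyj : y j₀ = x j₀ := by rw [hy, Function.update_of_ne (Ne.symm hlj)]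
  have hcomm : y' = Function.update x' l b := by
    rw [hy', hyj, hy, Function.update_comm hli, ← hx']
  have hne' : f (Function.update x' l b) ≠ f x' := by
    rw [← hcomm, hfy', hfx']
    exact hne
  refine ⟨x', b, ?_⟩
  have hx'i : x' i₀ = x j₀ := Function.update_self _ _ _
  have hx'j : x' j₀ = x j₀ := Function.update_of_ne (Ne.symm hij) _ _
  have h1 : minor f i₀ j₀ x' = f x' := minor_apply_of_eq (by rw [hx'i, hx'j])
  have h2 : minor f i₀ j₀ (Function.update x' l b) = f (Function.update x' l b) := by
    refine minor_apply_of_eq ?_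
    rw [Function.update_of_ne (Ne.symm hli), Function.update_of_ne (Ne.symm hlj), hx'i, hx'j]
  rw [h1, h2]
  exact hne'

/-- canonical projection: zero out the Sub-independent coordinates -/
noncomputable def theta (f : (Fin n → Fin k) → Fin k) (z0 : Fin k) (a : Fin n → Fin k) :
    Fin n → Fin k :=
  fun t => if Sdep f t then a t else z0

lemma theta_update_not_sdep {z0 : Fin k} {t : Fin n} (ht : ¬ Sdep f t)
    (a : Fin n → Fin k) (b : Fin k) : theta f z0 (Function.update a t b) = theta f z0 a := by
  funext s
  unfold theta
  by_cases hs : Sdep f s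
  · rw [if_pos hs, if_pos hs, Function.update_of_ne (fun h => ht (by rw [← h]; exact hs))]
  · rw [if_neg hs, if_neg hs]

lemma path_aux (z0 : Fin k) :
    ∀ m : ℕ, ∀ a : Fin n → Fin k,
      (Finset.univ.filter (fun t => ¬ Sdep f t ∧ a t ≠ z0)).card = m →
      (∃ c c', c ≠ c' ∧ ¬ Sdep f c ∧ ¬ Sdep f c' ∧ a c = z0 ∧ a c' = z0) →
      f a = f (theta f z0 a) := by
  intro m
  induction m with
  | zero =>
    intro a hcard _
    have : theta f z0 a = a := by
      funext s
      unfold theta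
      by_cases hs : Sdep f s
      · rw [if_pos hs]
      · rw [if_neg hs]
        by_contra hne
        have : s ∈ Finset.univ.filter (fun t => ¬ Sdep f t ∧ a t ≠ z0) := by
          rw [Finset.mem_filter]
          exact ⟨Finset.mem_univ _, hs, fun h => hne h.symm⟩
        rw [Finset.card_eq_zero] at hcard
        rw [hcard] at this
        exact absurd this (Finset.notMem_empty _)
    rw [this]
  | succ m ih =>
    intro a hcard hzp
    obtain ⟨c, c', hcc', hcS, hc'S, hcz, hc'z⟩ := hzp
    have hne0 : (Finset.univ.filter (fun t => ¬ Sdep f t ∧ a t ≠ z0)).Nonempty := by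
      rw [← Finset.card_pos, hcard]; omega
    obtain ⟨t, ht⟩ := hne0
    rw [Finset.mem_filter] at ht
    obtain ⟨-, htS, htz⟩ := ht
    have htc : t ≠ c := fun h => htz (h ▸ hcz)
    have htc' : t ≠ c' := fun h => htz (h ▸ hc'z)
    set a' := Function.update a t z0 with ha'
    have hRa : HasRep a := ⟨c, c', hcc', by rw [hcz, hc'z]⟩
    have hRa' : HasRep a' := ⟨c, c', hcc', by
      rw [ha', Function.update_of_ne (Ne.symm htc), Function.update_of_ne (Ne.symm htc'),
        hcz, hc'z]⟩
    have hstep : f a' = f a := not_sdep_invariant htS z0 hRa hRa'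
    have hfilter : (Finset.univ.filter (fun s => ¬ Sdep f s ∧ a' s ≠ z0)) =
        (Finset.univ.filter (fun s => ¬ Sdep f s ∧ a s ≠ z0)).erase t := by
      ext s
      rw [Finset.mem_erase, Finset.mem_filter, Finset.mem_filter]
      constructor
      · rintro ⟨hu, hsS, hsz⟩
        have hst : s ≠ t := by
          intro h
          rw [h, ha', Function.update_self] at hsz
          exact hsz rfl
        rw [ha', Function.update_of_ne hst] at hsz
        exact ⟨hst, hu, hsS, hsz⟩
      · rintro ⟨hst, hu, hsS, hsz⟩
        rw [ha', Function.update_of_ne hst]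
        exact ⟨hu, hsS, hsz⟩
    have hcard' : (Finset.univ.filter (fun s => ¬ Sdep f s ∧ a' s ≠ z0)).card = m := by
      rw [hfilter, Finset.card_erase_of_mem, hcard]
      · rfl
      · rw [Finset.mem_filter]; exact ⟨Finset.mem_univ _, htS, htz⟩
    have hzp' : ∃ d d', d ≠ d' ∧ ¬ Sdep f d ∧ ¬ Sdep f d' ∧ a' d = z0 ∧ a' d' = z0 := by
      refine ⟨c, c', hcc', hcS, hc'S, ?_, ?_⟩
      · rw [ha', Function.update_of_ne (Ne.symm htc)]; exact hcz
      · rw [ha', Function.update_of_ne (Ne.symm htc')]; exact hc'z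
    have := ih a' hcard' hzp'
    rw [theta_update_not_sdep htS] at this
    rw [← hstep, this]

/-- three distinct elements of a set of size ≥ 3 -/
lemma three_distinct {s : Finset (Fin n)} (h : 3 ≤ s.card) :
    ∃ c₁ c₂ c₃, c₁ ∈ s ∧ c₂ ∈ s ∧ c₃ ∈ s ∧ c₁ ≠ c₂ ∧ c₁ ≠ c₃ ∧ c₂ ≠ c₃ := by
  obtain ⟨c₁, hc₁⟩ : s.Nonempty := by rw [← Finset.card_pos]; omega
  have h2 : 2 ≤ (s.erase c₁).card := by
    have := Finset.card_erase_of_mem hc₁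
    omega
  obtain ⟨c₂, hc₂, c₃, hc₃, hne⟩ := Finset.one_lt_card.mp h2
  rw [Finset.mem_erase] at hc₂ hc₃
  exact ⟨c₁, c₂, c₃, hc₁, hc₂.2, hc₃.2, fun h => hc₂.1 h.symm, fun h => hc₃.1 h.symm, hne⟩

lemma path (z0 : Fin k)
    (h3 : 3 ≤ (Finset.univ.filter (fun c => ¬ Sdep f c)).card) :
    ∀ a, HasRep a → f a = f (theta f z0 a) := by
  intro a hRa
  obtain ⟨c₁, c₂, c₃, hm₁, hm₂, hm₃, h12, h13, h23⟩ := three_distinct h3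
  rw [Finset.mem_filter] at hm₁ hm₂ hm₃
  have hS₁ := hm₁.2; have hS₂ := hm₂.2; have hS₃ := hm₃.2
  obtain ⟨s, t, hst, hcol⟩ := hRa
  -- pick u ∈ {c₁,c₂,c₃} \ {s,t}
  obtain ⟨u, huS, hus, hut⟩ : ∃ u, ¬ Sdep f u ∧ u ≠ s ∧ u ≠ t := by
    by_cases e1 : c₁ ≠ s ∧ c₁ ≠ t
    · exact ⟨c₁, hS₁, e1.1, e1.2⟩
    by_cases e2 : c₂ ≠ s ∧ c₂ ≠ t
    · exact ⟨c₂, hS₂, e2.1, e2.2⟩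
    rw [not_and_or, not_not, not_not] at e1 e2
    refine ⟨c₃, hS₃, ?_, ?_⟩ <;>
    · intro h
      rcases e1 with rfl | rfl <;> rcases e2 with rfl | rfl <;> simp_all
  obtain ⟨u', hu'S, huu'⟩ : ∃ u', ¬ Sdep f u' ∧ u' ≠ u := by
    by_cases h : c₁ = u
    · exact ⟨c₂, hS₂, fun hh => h12 (hh.trans h.symm).symm⟩
    · exact ⟨c₁, hS₁, h⟩
  set a1 := Function.update a u z0 with ha1
  have hRa1 : HasRep a1 := ⟨s, t, hst, by
    rw [ha1, Function.update_of_ne (Ne.symm hus), Function.update_of_ne (Ne.symm hut)]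
    exact hcol⟩
  have e1 : f a1 = f a := not_sdep_invariant huS z0 ⟨s, t, hst, hcol⟩ hRa1
  set a2 := Function.update a1 u' z0 with ha2
  have ha2u : a2 u = z0 := by
    rw [ha2, Function.update_of_ne (Ne.symm huu'), ha1, Function.update_self]
  have ha2u' : a2 u' = z0 := by rw [ha2, Function.update_self]
  have hRa2 : HasRep a2 := by
    by_cases hu'st : u' ≠ s ∧ u' ≠ t
    · refine ⟨s, t, hst, ?_⟩
      rw [ha2, Function.update_of_ne (Ne.symm hu'st.1), Function.update_of_ne (Ne.symm hu'st.2),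
        ha1, Function.update_of_ne (Ne.symm hus), Function.update_of_ne (Ne.symm hut)]
      exact hcol
    · exact ⟨u, u', Ne.symm huu', by rw [ha2u, ha2u']⟩
  have e2 : f a2 = f a1 := not_sdep_invariant hu'S z0 hRa1 hRa2
  have e3 : f a2 = f (theta f z0 a2) :=
    path_aux z0 _ a2 rfl ⟨u, u', Ne.symm huu', huS, hu'S, ha2u, ha2u'⟩
  have e4 : theta f z0 a2 = theta f z0 a := by
    rw [ha2, theta_update_not_sdep hu'S, ha1, theta_update_not_sdep huS]
  rw [← e1, ← e2, e3, e4]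

lemma hasRep_update_pair {a : Fin n → Fin k} {i j : Fin n} (hij : i ≠ j) :
    HasRep (Function.update a i (a j)) :=
  ⟨i, j, hij, by rw [Function.update_self, Function.update_of_ne (Ne.symm hij)]⟩

end Machinery

section Main

variable {f : (Fin n → Fin k) → Fin k}

lemma essCount_eq_n (hess : ∀ i : Fin n, Essential f i) : essCount f = n := by
  unfold essCount
  rw [Finset.filter_true_of_mem (fun i _ => hess i)]
  simp

/-- The sup appearing in the definition of gap. -/
noncomputable def supMinor (f : (Fin n → Fin k) → Fin k) : ℕ :=
  Finset.sup
    (Finset.univ.filter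
      (fun p : Fin n × Fin n =>
        p.1 ≠ p.2 ∧ Essential f p.1 ∧ Essential f p.2))
    (fun p => essCount (minor f p.1 p.2))

lemma gap_eq : gap f = essCount f - supMinor f := rfl

lemma supMinor_le_n : supMinor f ≤ n := by
  apply Finset.sup_le
  intro p _
  exact essCount_le _

lemma le_supMinor (hess : ∀ i : Fin n, Essential f i) {i j : Fin n} (hij : i ≠ j) :
    essCount (minor f i j) ≤ supMinor f := by
  apply Finset.le_sup (f := fun p : Fin n × Fin n => essCount (minor f p.1 p.2))
    (b := (i, j))
  rw [Finset.mem_filter]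
  exact ⟨Finset.mem_univ _, hij, hess i, hess j⟩

end Main

end GapAux

theorem gap_eq_p_iff_decomposition {k n p : ℕ} (hp : 2 < p) (hpn : p < n) (hnk : n ≤ k)
    (f : (Fin n → Fin k) → Fin k)
    (hess : ∀ i : Fin n, Essential f i) :
    gap f = p ↔
      ∃ h g : (Fin n → Fin k) → Fin k,
        f = (fun a => h a + g a) ∧
        essCount h = n - p ∧
        (∀ i : Fin n, Essential g i) ∧
        (∀ i j : Fin n, i ≠ j →
          minor g i j = fun _ => (⟨0, by omega⟩ : Fin k)) := by
  classical
  open GapAux in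
  have hk0 : 0 < k := by omega
  haveI : NeZero k := ⟨by omega⟩
  have hn4 : 4 ≤ n := by omega
  have hmk : ∀ (hx : 0 < k), (⟨0, hx⟩ : Fin k) = (0 : Fin k) := fun hx => Fin.ext (by simp)
  have hessn : essCount f = n := GapAux.essCount_eq_n hess
  constructor
  · -- forward direction
    intro hgap
    rw [GapAux.gap_eq, hessn] at hgap
    have hMn : GapAux.supMinor f ≤ n := GapAux.supMinor_le_n
    have hM : GapAux.supMinor f = n - p := by omega
    have HBm : ∀ i j : Fin n, i ≠ j → essCount (minor f i j) ≤ n - p := by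
      intro i j hij
      rw [← hM]
      exact GapAux.le_supMinor hess hij
    have HB3 : ∀ i j : Fin n, i ≠ j → essCount (minor f i j) ≤ n - 3 := by
      intro i j hij
      exact le_trans (HBm i j hij) (by omega)
    -- three Sub-independent coordinates
    have hsub : (Finset.univ.filter (fun c => ¬ GapAux.COV f c)) ⊆
        (Finset.univ.filter (fun c => ¬ GapAux.Sdep f c)) := by
      intro c hc
      rw [Finset.mem_filter] at hc ⊢
      exact ⟨Finset.mem_univ _, GapAux.not_sdep_of_good hn4 HB3 hc.2⟩
    have h3 : 3 ≤ (Finset.univ.filter (fun c => ¬ GapAux.Sdep f c)).card :=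
      le_trans (GapAux.exists_three_good hn4 HB3) (Finset.card_le_card hsub)
    obtain ⟨c₁, c₂, c₃, hm₁, hm₂, hm₃, h12, h13, h23⟩ := GapAux.three_distinct h3
    rw [Finset.mem_filter] at hm₁ hm₂
    have hi₀ : ¬ GapAux.Sdep f c₁ := hm₁.2
    have hj₀ : ¬ GapAux.Sdep f c₂ := hm₂.2
    -- the Sub-dependence set is small
    have hSsub : (Finset.univ.filter (fun c => GapAux.Sdep f c)) ⊆
        GapAux.essSet (minor f c₁ c₂) := by
      intro l hl
      rw [Finset.mem_filter] at hl
      rw [GapAux.essSet, Finset.mem_filter]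
      exact ⟨Finset.mem_univ _, GapAux.sdep_transfer h12 hi₀ hj₀ hl.2⟩
    have hScard : (Finset.univ.filter (fun c => GapAux.Sdep f c)).card ≤ n - p :=
      le_trans (Finset.card_le_card hSsub) (HBm c₁ c₂ h12)
    -- the quotient function
    set z0 : Fin k := ⟨0, by omega⟩ with hz0
    have hpath : ∀ a, GapAux.HasRep a → f a = f (GapAux.theta f z0 a) := by
      refine GapAux.path z0 ?_
      have : 3 ≤ (Finset.univ.filter (fun c => ¬ GapAux.Sdep f c)).card := h3
      exact this
    set hh : (Fin n → Fin k) → Fin k := fun a => f (GapAux.theta f z0 a) with hhh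
    have hh_eq : ∀ a, GapAux.HasRep a → hh a = f a := fun a ha => (hpath a ha).symm
    -- essential set of hh
    have hhS : GapAux.essSet hh = Finset.univ.filter (fun c => GapAux.Sdep f c) := by
      ext t
      rw [GapAux.essSet, Finset.mem_filter, Finset.mem_filter]
      constructor
      · rintro ⟨-, ht⟩
        refine ⟨Finset.mem_univ _, ?_⟩
        by_contra htS
        obtain ⟨a, b, hne⟩ := ht
        apply hne
        rw [hhh]
        simp only
        rw [GapAux.theta_update_not_sdep htS]
      · rintro ⟨-, ht⟩
        obtain ⟨x, b, hRx, hRy, hne⟩ := ht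
        refine ⟨Finset.mem_univ _, x, b, ?_⟩
        rw [hh_eq _ hRy, hh_eq _ hRx]
        exact hne
    -- the attained pair
    have hfilterne : (Finset.univ.filter
        (fun q : Fin n × Fin n => q.1 ≠ q.2 ∧ Essential f q.1 ∧ Essential f q.2)).Nonempty := by
      refine ⟨(c₁, c₂), ?_⟩
      rw [Finset.mem_filter]
      exact ⟨Finset.mem_univ _, h12, hess c₁, hess c₂⟩
    obtain ⟨q, hq, hqsup⟩ := Finset.exists_mem_eq_sup _ hfilterne
      (fun q : Fin n × Fin n => essCount (minor f q.1 q.2))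
    rw [Finset.mem_filter] at hq
    have hq12 : q.1 ≠ q.2 := hq.2.1
    have hminor_eq : ∀ i j : Fin n, i ≠ j → minor f i j = minor hh i j := by
      intro i j hij
      funext a
      have hrep : GapAux.HasRep (Function.update a i (a j)) := GapAux.hasRep_update_pair hij
      show f (Function.update a i (a j)) = hh (Function.update a i (a j))
      rw [hh_eq _ hrep]
    have hcard_ge : n - p ≤ (Finset.univ.filter (fun c => GapAux.Sdep f c)).card := by
      have h1 : GapAux.supMinor f = essCount (minor f q.1 q.2) := hqsup
      have h2 : essCount (minor f q.1 q.2) = essCount (minor hh q.1 q.2) := by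
        rw [hminor_eq q.1 q.2 hq12]
      have h3' : essCount (minor hh q.1 q.2) ≤ essCount hh :=
        GapAux.essCount_minor_le hh hq12
      have h4 : essCount hh = (Finset.univ.filter (fun c => GapAux.Sdep f c)).card := by
        show (GapAux.essSet hh).card = _
        rw [hhS]
      omega
    have hhcount : essCount hh = n - p := by
      have h4 : essCount hh = (Finset.univ.filter (fun c => GapAux.Sdep f c)).card := by
        show (GapAux.essSet hh).card = _
        rw [hhS]
      omega
    -- define g
    set g : (Fin n → Fin k) → Fin k := fun a => f a - hh a with hg
    have hfg : f = fun a => hh a + g a := by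
      funext a
      rw [hg]
      simp only
      rw [add_comm, sub_add_cancel]
    have hgminor : ∀ i j : Fin n, i ≠ j →
        minor g i j = fun _ => (⟨0, by omega⟩ : Fin k) := by
      intro i j hij
      funext a
      show g (Function.update a i (a j)) = (⟨0, by omega⟩ : Fin k)
      rw [hmk, hg]
      simp only
      rw [hh_eq _ (GapAux.hasRep_update_pair hij), sub_self]
    have hgess : ∀ i : Fin n, Essential g i := by
      intro i
      by_contra hni
      rw [GapAux.not_essential_iff] at hni
      have hg0 : ∀ a, g a = 0 := by
        intro a
        obtain ⟨j, hj⟩ : ∃ j : Fin n, j ≠ i := by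
          rcases GapAux.three_distinct h3 with ⟨d₁, d₂, d₃, -, -, -, hd12, hd13, -⟩
          by_cases h : d₁ = i
          · exact ⟨d₂, fun hh' => hd12 (h.trans hh'.symm)⟩
          · exact ⟨d₁, h⟩
        have h1 : g (Function.update a i (a j)) = g a := hni a (a j)
        have h2 : g (Function.update a i (a j)) = 0 := by
          have := congrFun (hgminor i j (Ne.symm hj)) a
          rw [hmk] at this
          exact this
        rw [← h1, h2]
      have hfh : f = hh := by
        funext a
        have := congrFun hfg a
        rw [hg0 a, add_zero] at this
        exact this
      have : essCount f = essCount hh := by rw [hfh]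
      omega
    exact ⟨hh, g, hfg, hhcount, hgess, hgminor⟩
  · -- reverse direction
    rintro ⟨hh, g, hfg, hhc, hge, hgm⟩
    rw [GapAux.gap_eq, hessn]
    have hminor_eq : ∀ i j : Fin n, i ≠ j → minor f i j = minor hh i j := by
      intro i j hij
      funext a
      show f (Function.update a i (a j)) = hh (Function.update a i (a j))
      rw [hfg]
      simp only
      have hg0 : g (Function.update a i (a j)) = 0 := by
        have := congrFun (hgm i j hij) a
        rw [hmk] at this
        exact this
      rw [hg0, add_zero]
    have hMle : GapAux.supMinor f ≤ n - p := by
      apply Finset.sup_le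
      intro q hq
      rw [Finset.mem_filter] at hq
      rw [hminor_eq q.1 q.2 hq.2.1, ← hhc]
      exact GapAux.essCount_minor_le hh hq.2.1
    have hMge : n - p ≤ GapAux.supMinor f := by
      obtain ⟨i, hi⟩ : ∃ i : Fin n, ¬ Essential hh i := by
        by_contra hcon
        push_neg at hcon
        have := GapAux.essCount_eq_n hcon
        omega
      obtain ⟨j, hj⟩ : ∃ j : Fin n, i ≠ j := by
        refine ⟨if i = ⟨0, by omega⟩ then ⟨1, by omega⟩ else ⟨0, by omega⟩, ?_⟩
        split
        · rename_i hh0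
          rw [hh0]
          intro hcon
          have := congrArg Fin.val hcon
          simp at this
        · rename_i hh0
          intro hcon
          exact hh0 hcon
      have h1 : minor hh i j = hh := GapAux.minor_eq_of_not_essential hi
      have h2 : essCount (minor f i j) = n - p := by
        rw [hminor_eq i j hj, h1, hhc]
      rw [← h2]
      exact GapAux.le_supMinor hess hj
    have : GapAux.supMinor f = n - p := le_antisymm hMle hMge
    rw [this]
    omega
end

section
/- Let 3 < n ≤ k and let f : K^n → K with ess(f) = n and gap(f) = 2. Then either (a) there exist i ≠ j with x_j essential in f_{i←j} and ess(f_{i←j}) = n − 2, or (b) for all u ≠ v, x_v is not essential in f_{u←v}. (I.e., G_{2,k}^n = G_{2,k}^{n,+} ∪ G_{2,k}^{n,−}.) -/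
open scoped Classical

/-!
Take a pair `(i, j)` with `ess f_{i←j} = n - 2`, which the gap condition provides, and assume no
pair is of type (a). Then `x_j` is inessential in `G = f_{i←j}`, so `G` depends exactly on the
variables outside `{i, j}`. Counting essential variables shows that for `z ∉ {i, j}` the merged
variable of `f_{z←i}` and of `f_{z←j}` is inessential, whence `f_{z←i} = G_{z←j}` and
`f_{z←j} = G_{z←i}`. Evaluating both expressions at a point with `x_u = x_i` and `x_v = x_j`
shows that `G` is constant along each diagonal `x_u = x_v` with `u, v ∉ {i, j}`. Finally, if
`x_v` were essential in some `f_{u←v}`, counting yields another inessential variable `x_d` of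
`f_{u←v}`, and identifying it with `i` or `j` writes `f_{u←v}` as a minor of `G_{u←v}`, in
which `x_v` is inessential.
-/

open Function Finset

variable {n k : ℕ} {f g : (Fin n → Fin k) → Fin k}

theorem not_essential_iff {s : Fin n} : ¬ Essential g s ↔ ∀ a b, g (update a s b) = g a := by
  simp [Essential]

theorem minor_apply_of_eq {i j : Fin n} {a : Fin n → Fin k} (h : a i = a j) :
    minor f i j a = f a := by
  simp [minor, ← h]

theorem not_essential_minor_self {s t : Fin n} (hst : s ≠ t) : ¬ Essential (minor f s t) s :=
  not_essential_iff.2 fun a b => by simp [minor, hst.symm]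

theorem minor_eq_self_of_not_essential {i : Fin n} (h : ¬ Essential f i) (j : Fin n) :
    minor f i j = f :=
  funext fun a => not_essential_iff.1 h a (a j)

theorem minor_minor_swap (i j : Fin n) : minor (minor f i j) j i = minor f j i := by
  funext a
  simp only [minor]
  congr 1
  ext w
  by_cases hwi : w = i <;> by_cases hwj : w = j <;> simp_all

theorem minor_swap_eq {i j : Fin n} (h : ¬ Essential (minor f i j) j) :
    minor f j i = minor f i j := by
  rw [← minor_minor_swap, minor_eq_self_of_not_essential h]

theorem not_essential_minor_swap {i j : Fin n} (hij : i ≠ j) (h : ¬ Essential (minor f i j) j) :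
    ¬ Essential (minor f j i) i := by
  rw [minor_swap_eq h]
  exact not_essential_minor_self hij

theorem minor_minor_comm {u v i j : Fin n} (hvi : v ≠ i) (hju : j ≠ u) (hui : u ≠ i) :
    minor (minor f u v) i j = minor (minor f i j) u v := by
  funext a
  simp only [minor, update_of_ne hvi, update_of_ne hju, update_comm hui]

theorem minor_minor_merge (z c e : Fin n) :
    minor (minor f z c) c e = minor (minor f c e) z e := by
  funext a
  simp only [minor]
  congr 1
  ext w
  simp only [update_apply]
  split_ifs <;> simp_all

theorem Essential.of_minor {u w y : Fin n} (h : Essential (minor f u w) y) (hyu : y ≠ u)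
    (hyw : y ≠ w) : Essential f y := by
  obtain ⟨a, b, hab⟩ := h
  refine ⟨update a u (a w), b, ?_⟩
  simpa [minor, update_of_ne hyw.symm, update_comm hyu] using hab

theorem Essential.minor_of_not_essential {y z c : Fin n} (hy : Essential g y)
    (hc : ¬ Essential g c) (hyz : y ≠ z) (hyc : y ≠ c) : Essential (minor g z c) y := by
  obtain ⟨a, b, hab⟩ := hy
  have hz : update (update a c (a z)) z (a z) = update a c (a z) :=
    update_eq_self_iff.2 (by by_cases hzc : z = c <;> simp [hzc])
  refine ⟨update a c (a z), b, ?_⟩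
  simp only [minor]
  rwa [update_of_ne hyc.symm, update_self, update_comm hyz, hz, update_comm hyc.symm,
    not_essential_iff.1 hc, not_essential_iff.1 hc]

theorem not_essential_minor {v d e : Fin n} (h : ¬ Essential g v) (hvd : v ≠ d) (hve : v ≠ e) :
    ¬ Essential (minor g d e) v :=
  not_essential_iff.2 fun a b => by
    simp only [minor, update_of_ne hve.symm, update_comm hvd, not_essential_iff.1 h]

theorem apply_eq_of_forall_essential {x y : Fin n → Fin k}
    (h : ∀ w, Essential g w → x w = y w) : g x = g y := by
  suffices key : ∀ s : Finset (Fin n), ∀ x : Fin n → Fin k,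
      (∀ w ∉ s, x w = y w) → (∀ w, Essential g w → x w = y w) → g x = g y from
    key univ x (by simp) h
  intro s
  induction s using Finset.induction_on with
  | empty => exact fun x hx _ => congrArg g (funext fun w => hx w (notMem_empty w))
  | insert w s _ ih =>
    intro x hx hess
    have hupd : g (update x w (y w)) = g x := by
      by_cases hw : Essential g w
      · rw [← hess w hw, update_eq_self]
      · exact not_essential_iff.1 hw x (y w)
    rw [← hupd]
    refine ih _ (fun v hv => ?_) (fun v hv => ?_) <;> by_cases hvw : v = w
    all_goals simp_all

theorem essCount_le (g : (Fin n → Fin k) → Fin k) : essCount g ≤ n := by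
  simpa [essCount] using card_filter_le univ (Essential g)

theorem card_sub_le_essCount (s : Finset (Fin n)) (h : ∀ y ∉ s, Essential g y) :
    n - #s ≤ essCount g := by
  simpa [essCount, card_univ_sdiff] using
    card_le_card (s := univ \ s) (t := univ.filter (Essential g)) fun y hy =>
      mem_filter.2 ⟨mem_univ y, h y (mem_sdiff.1 hy).2⟩

theorem exists_not_essential_of_essCount_lt (h : essCount g < n - 1) (u : Fin n) :
    ∃ d ≠ u, ¬ Essential g d := by
  by_contra! hall
  have := card_sub_le_essCount {u} fun d hd => hall d (by simpa using hd)
  rw [card_singleton] at this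
  omega

theorem essential_of_essCount_eq_sub {s : Finset (Fin n)} (h : essCount g = n - #s)
    (hs : ∀ y ∈ s, ¬ Essential g y) {y : Fin n} (hy : y ∉ s) : Essential g y := by
  have hsub : univ.filter (Essential g) ⊆ univ \ s := fun w hw =>
    mem_sdiff.2 ⟨mem_univ w, fun hws => hs w hws (mem_filter.1 hw).2⟩
  have heq := eq_of_subset_of_card_le hsub (by simpa [essCount, card_univ_sdiff] using h.ge)
  exact (mem_filter.1 (heq ▸ mem_sdiff.2 ⟨mem_univ y, hy⟩)).2

theorem essential_of_essCount_eq (h : essCount g = n) (y : Fin n) : Essential g y :=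
  essential_of_essCount_eq_sub (s := ∅) (by simpa using h) (by simp) (notMem_empty y)

noncomputable def essentialPairs (f : (Fin n → Fin k) → Fin k) : Finset (Fin n × Fin n) :=
  univ.filter fun p => p.1 ≠ p.2 ∧ Essential f p.1 ∧ Essential f p.2

theorem mem_essentialPairs_of_essCount_eq (hess : essCount f = n) {s t : Fin n} (hst : s ≠ t) :
    (s, t) ∈ essentialPairs f := by
  simp [essentialPairs, hst, essential_of_essCount_eq hess]

theorem sup_essCount_minor_eq_sub_gap (hess : essCount f = n) :
    (essentialPairs f).sup (fun p => essCount (minor f p.1 p.2)) = n - gap f := by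
  have hle : (essentialPairs f).sup (fun p => essCount (minor f p.1 p.2)) ≤ n :=
    Finset.sup_le fun p _ => essCount_le _
  rw [gap, hess]
  exact (Nat.sub_sub_self hle).symm

theorem essCount_minor_le_sub_gap (hess : essCount f = n) {s t : Fin n} (hst : s ≠ t) :
    essCount (minor f s t) ≤ n - gap f := by
  rw [← sup_essCount_minor_eq_sub_gap hess]
  exact le_sup (f := fun p => essCount (minor f p.1 p.2))
    (mem_essentialPairs_of_essCount_eq hess hst)

theorem exists_essCount_minor_eq_sub_gap (hess : essCount f = n) (hn : 2 ≤ n) :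
    ∃ i j, i ≠ j ∧ essCount (minor f i j) = n - gap f := by
  have h01 : (⟨0, by omega⟩ : Fin n) ≠ ⟨1, by omega⟩ := by simp
  obtain ⟨⟨i, j⟩, hp, hmax⟩ := exists_mem_eq_sup _
    ⟨_, mem_essentialPairs_of_essCount_eq hess h01⟩ (fun p => essCount (minor f p.1 p.2))
  refine ⟨i, j, ?_, by rw [← hmax, sup_essCount_minor_eq_sub_gap hess]⟩
  simp_all [essentialPairs]

theorem not_essential_minor_of_minor_eq_minor {i j u v : Fin n} (hij : i ≠ j) (hui : u ≠ i)
    (huj : u ≠ j) (hvi : v ≠ i) (hvj : v ≠ j) (huv : u ≠ v) (hgi : ¬ Essential g i)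
    (hgj : ¬ Essential g j) (hu : minor f u i = minor g u j) (hv : minor f v j = minor g v i) :
    ¬ Essential (minor g u v) v := by
  rw [not_essential_iff]
  intro a b
  set p := update (update (update (update a u (a v)) v b) i (a v)) j b
  have hpu : f p = g (update p u b) := by
    rw [← minor_apply_of_eq (f := f) (i := u) (j := i) (by simp [p, hui, huj, huv, hij]), hu]
    simp [minor, p]
  have hpv : f p = g (update p v (a v)) := by
    rw [← minor_apply_of_eq (f := f) (i := v) (j := j) (by simp [p, hvi, hvj]), hv]
    simp [minor, p, hij]
  have hoff : ∀ w, Essential g w → w ≠ i ∧ w ≠ j := fun w hw =>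
    ⟨fun h => hgi (h ▸ hw), fun h => hgj (h ▸ hw)⟩
  simp only [minor, update_self]
  calc g (update (update a v b) u b)
        = g (update p u b) := apply_eq_of_forall_essential fun w hw => by
          simp only [p, update_apply]
          split_ifs <;> simp_all
    _ = g (update p v (a v)) := hpu.symm.trans hpv
    _ = g (update a u (a v)) := apply_eq_of_forall_essential fun w hw => by
          simp only [p, update_apply]
          split_ifs <;> simp_all

def EssCountMinorLt (f : (Fin n → Fin k) → Fin k) (m : ℕ) : Prop :=
  ∀ s t, s ≠ t → Essential (minor f s t) t → essCount (minor f s t) < m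

section MaximalMinor

variable {i j : Fin n}

theorem not_essential_minor_of_essCount_eq
    (hlt : EssCountMinorLt f (n - 2)) (hij : i ≠ j) (hG : essCount (minor f i j) = n - 2) :
    ¬ Essential (minor f i j) j :=
  fun h => (hlt i j hij h).ne hG

theorem essCount_minor_swap
    (hlt : EssCountMinorLt f (n - 2)) (hij : i ≠ j) (hG : essCount (minor f i j) = n - 2) :
    essCount (minor f j i) = n - 2 := by
  rwa [minor_swap_eq (not_essential_minor_of_essCount_eq hlt hij hG)]

theorem essential_minor_of_essCount_eq
    (hlt : EssCountMinorLt f (n - 2)) (hij : i ≠ j) (hG : essCount (minor f i j) = n - 2)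
    {y : Fin n} (hyi : y ≠ i) (hyj : y ≠ j) : Essential (minor f i j) y :=
  essential_of_essCount_eq_sub (s := {i, j}) (by rwa [card_pair hij])
    (by simp [not_essential_minor_self hij, not_essential_minor_of_essCount_eq hlt hij hG])
    (by simp [hyi, hyj])

theorem not_essential_minor_of_ne
    (hlt : EssCountMinorLt f (n - 2)) (hij : i ≠ j) (hG : essCount (minor f i j) = n - 2)
    {z : Fin n} (hzi : z ≠ i) (hzj : z ≠ j) : ¬ Essential (minor f z j) j := by
  intro hj
  have hess : ∀ y ∉ ({z, i} : Finset (Fin n)), Essential (minor f z j) y := by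
    intro y hy
    simp only [mem_insert, mem_singleton, not_or] at hy
    by_cases hyj : y = j
    · exact hyj ▸ hj
    have h := (essential_minor_of_essCount_eq hlt hij hG hy.2 hyj).minor_of_not_essential
      (not_essential_minor_of_essCount_eq hlt hij hG) hy.1 hyj
    rw [← minor_minor_comm hij.symm hzj.symm hzi] at h
    exact h.of_minor hy.2 hyj
  have hle := (Nat.sub_le_sub_left card_le_two n).trans (card_sub_le_essCount _ hess)
  exact (hlt z j hzj hj).not_ge hle

theorem minor_eq_minor_minor
    (hlt : EssCountMinorLt f (n - 2)) (hij : i ≠ j) (hG : essCount (minor f i j) = n - 2)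
    {d : Fin n} (hdi : d ≠ i) : minor f d i = minor (minor f i j) d j := by
  have hd : ¬ Essential (minor f d i) i := by
    by_cases hdj : d = j
    · exact hdj ▸ not_essential_minor_swap hij (not_essential_minor_of_essCount_eq hlt hij hG)
    · exact not_essential_minor_of_ne hlt hij.symm (essCount_minor_swap hlt hij hG) hdj hdi
  rw [← minor_eq_self_of_not_essential hd j, minor_minor_merge]

theorem not_essential_minor_of_not_essential
    (hlt : EssCountMinorLt f (n - 2)) (hij : i ≠ j) (hG : essCount (minor f i j) = n - 2)
    {u v d : Fin n} (hui : u ≠ i) (huj : u ≠ j) (hvi : v ≠ i) (hvj : v ≠ j) (huv : u ≠ v)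
    (hdu : d ≠ u) (hdv : d ≠ v) (hdi : d ≠ i) (hd : ¬ Essential (minor f u v) d) :
    ¬ Essential (minor f u v) v := by
  have hgv : ¬ Essential (minor (minor f i j) u v) v := by
    refine not_essential_minor_of_minor_eq_minor hij hui huj hvi hvj huv
      (not_essential_minor_self hij) (not_essential_minor_of_essCount_eq hlt hij hG)
      (minor_eq_minor_minor hlt hij hG hui) ?_
    rw [minor_eq_minor_minor hlt hij.symm (essCount_minor_swap hlt hij hG) hvj,
      minor_swap_eq (not_essential_minor_of_essCount_eq hlt hij hG)]
  rw [← minor_eq_self_of_not_essential hd i, minor_minor_comm hdv.symm hui.symm hdu.symm,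
    minor_eq_minor_minor hlt hij hG hdi, ← minor_minor_comm hdv.symm huj.symm hdu.symm]
  exact not_essential_minor hgv hdv.symm hvj

theorem forall_not_essential_minor
    (hlt : EssCountMinorLt f (n - 2)) (hij : i ≠ j) (hG : essCount (minor f i j) = n - 2) :
    ∀ u v, u ≠ v → ¬ Essential (minor f u v) v := by
  intro u v huv
  have hG' := essCount_minor_swap hlt hij hG
  have outer : ∀ {u v : Fin n}, u ≠ i → u ≠ j → u ≠ v →
      ¬ Essential (minor f u v) v := by
    intro u v hui huj huv
    by_cases hvi : v = i
    · rw [hvi]; exact not_essential_minor_of_ne hlt hij.symm hG' huj hui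
    by_cases hvj : v = j
    · rw [hvj]; exact not_essential_minor_of_ne hlt hij hG hui huj
    intro hv
    obtain ⟨d, hdu, hd⟩ :=
      exists_not_essential_of_essCount_lt ((hlt u v huv hv).trans_le (by omega)) u
    have hdv : d ≠ v := fun h => hd (h ▸ hv)
    by_cases hdi : d = i
    · exact not_essential_minor_of_not_essential hlt hij.symm hG' huj hui hvj hvi huv hdu hdv
        (hdi ▸ hij) hd hv
    · exact not_essential_minor_of_not_essential hlt hij hG hui huj hvi hvj huv hdu hdv hdi hd hv
  by_cases hu : u = i ∨ u = j
  · by_cases hv : v = i ∨ v = j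
    · obtain ⟨rfl, rfl⟩ | ⟨rfl, rfl⟩ : (u = i ∧ v = j) ∨ (u = j ∧ v = i) := by grind
      · exact not_essential_minor_of_essCount_eq hlt hij hG
      · exact not_essential_minor_of_essCount_eq hlt hij.symm hG'
    · rw [not_or] at hv
      exact not_essential_minor_swap huv.symm (outer hv.1 hv.2 huv.symm)
  · rw [not_or] at hu
    exact outer hu.1 hu.2 huv

end MaximalMinor

theorem gap_two_dichotomy_general {k n : ℕ} (hn : 3 < n)
    (f : (Fin n → Fin k) → Fin k)
    (hess : essCount f = n) (hgap : gap f = 2) :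
    (∃ i j : Fin n, i ≠ j ∧ Essential (minor f i j) j ∧
      essCount (minor f i j) = n - 2) ∨
    (∀ u v : Fin n, u ≠ v → ¬ Essential (minor f u v) v) := by
  by_cases hplus : ∃ i j : Fin n, i ≠ j ∧ Essential (minor f i j) j ∧
      essCount (minor f i j) = n - 2
  · exact Or.inl hplus
  push Not at hplus
  have hlt : EssCountMinorLt f (n - 2) :=
    fun s t hst hs => (hgap ▸ essCount_minor_le_sub_gap hess hst).lt_of_ne (hplus s t hst hs)
  obtain ⟨i, j, hij, hG⟩ := exists_essCount_minor_eq_sub_gap hess (by omega)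
  exact Or.inr (forall_not_essential_minor hlt hij (hgap ▸ hG))

theorem gap_two_dichotomy {k n : ℕ} (hn : 3 < n) (hnk : n ≤ k)
    (f : (Fin n → Fin k) → Fin k)
    (hess : essCount f = n) (hgap : gap f = 2) :
    (∃ i j : Fin n, i ≠ j ∧ Essential (minor f i j) j ∧
      essCount (minor f i j) = n - 2) ∨
    (∀ u v : Fin n, u ≠ v → ¬ Essential (minor f u v) v) :=
  gap_two_dichotomy_general hn f hess hgap
end

section
/- Let n > 3, 3 < n ≤ k, and let f : K^n → K depend essentially on all n variables. Then f ∈ G_{2,k}^{n,+} if and only if f = h ⊕ g where h depends essentially on exactly n − 2 variables, g depends essentially on all n variables, and all identification minors g_{i←j} (i ≠ j) are identically zero. -/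
open scoped Classical

namespace GapProof
open Function Finset

variable {n k : ℕ}

lemma not_essential_iff (F : (Fin n → Fin k) → Fin k) (y : Fin n) :
    ¬ Essential F y ↔ ∀ a v, F (Function.update a y v) = F a := by
  unfold Essential; push_neg; exact Iff.rfl

lemma notEss_minor_fst (f : (Fin n → Fin k) → Fin k) {p q : Fin n} (hpq : p ≠ q) :
    ∀ a v, minor f p q (Function.update a p v) = minor f p q a := by
  intro a v
  show f (Function.update (Function.update a p v) p ((Function.update a p v) q))
      = f (Function.update a p (a q))
  rw [Function.update_of_ne hpq.symm, Function.update_idem]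

section Core

variable (f : (Fin n → Fin k) → Fin k) (i j ℓ : Fin n)
variable (hij : i ≠ j) (hli : ℓ ≠ i) (hlj : ℓ ≠ j)
variable (hHl : ∀ a v, minor f i j (Function.update a ℓ v) = minor f i j a)
variable (hHess : ∀ y, y ≠ i → y ≠ ℓ → Essential (minor f i j) y)

set_option linter.unusedSectionVars false

include hij hli hlj hHl hHess

lemma hl' : ∀ (a : Fin n → Fin k) (v : Fin k),
    f (Function.update (Function.update a i (a j)) ℓ v) = minor f i j a := by
  intro a v
  calc f (Function.update (Function.update a i (a j)) ℓ v)
      = minor f i j (Function.update a ℓ v) := by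
        show _ = f (Function.update (Function.update a ℓ v) i ((Function.update a ℓ v) j))
        rw [Function.update_of_ne hlj.symm, Function.update_comm hli]
    _ = minor f i j a := hHl a v

lemma l2 : ∀ (s : Fin n) (a : Fin n → Fin k),
    minor f ℓ s (Function.update a i (a j)) = minor f i j a := by
  intro s a
  show f (Function.update (Function.update a i (a j)) ℓ ((Function.update a i (a j)) s))
      = minor f i j a
  exact hl' f i j ℓ hij hli hlj hHl hHess a _

lemma funnel (s y : Fin n) (hyi : y ≠ i) (hyj : y ≠ j) (hyl : y ≠ ℓ)
    (hNy : ∀ a v, minor f ℓ s (Function.update a y v) = minor f ℓ s a) :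
    ∀ a v, minor f i j (Function.update a y v) = minor f i j a := by
  intro a v
  calc minor f i j (Function.update a y v)
      = minor f ℓ s (Function.update (Function.update a y v) i
          ((Function.update a y v) j)) := (l2 f i j ℓ hij hli hlj hHl hHess s _).symm
    _ = minor f ℓ s (Function.update (Function.update a y v) i (a j)) := by
        rw [Function.update_of_ne hyj.symm]
    _ = minor f ℓ s (Function.update (Function.update a i (a j)) y v) := by
        rw [Function.update_comm hyi]
    _ = minor f ℓ s (Function.update a i (a j)) := hNy _ v
    _ = minor f i j a := l2 f i j ℓ hij hli hlj hHl hHess s a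

lemma aToEq (s : Fin n)
    (hAs : ∀ a v, minor f ℓ s (Function.update a i v) = minor f ℓ s a) :
    ∀ a, minor f ℓ s a = minor f i j a := by
  intro a
  calc minor f ℓ s a = minor f ℓ s (Function.update a i (a j)) := (hAs a (a j)).symm
    _ = minor f i j a := l2 f i j ℓ hij hli hlj hHl hHess s a

lemma itrick (s : Fin n) (hsj : s ≠ j)
    (hid : ∀ a, minor f i j a = minor f i j (Function.update a j (a s))) : False := by
  have key : ∀ a v, minor f i j (Function.update a j v) = minor f i j a := by
    intro a v
    calc minor f i j (Function.update a j v)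
        = minor f i j (Function.update (Function.update a j v) j
            ((Function.update a j v) s)) := hid _
      _ = minor f i j (Function.update (Function.update a j v) j (a s)) := by
          rw [Function.update_of_ne hsj]
      _ = minor f i j (Function.update a j (a s)) := by rw [Function.update_idem]
      _ = minor f i j a := (hid a).symm
  exact absurd (hHess j hij.symm hlj.symm) ((not_essential_iff _ _).mpr key)

lemma chainBt (t : Fin n) (htj : t ≠ j)
    (hBt : ∀ a v, minor f ℓ t (Function.update a j v) = minor f ℓ t a)
    (hAjEq : ∀ a, minor f ℓ j a = minor f i j a) :
    ∀ c, minor f ℓ t c = minor f i j (Function.update c j (c t)) := by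
  intro c
  calc minor f ℓ t c = minor f ℓ t (Function.update c j (c t)) := (hBt c (c t)).symm
    _ = f (Function.update (Function.update c j (c t)) ℓ
        ((Function.update c j (c t)) t)) := rfl
    _ = f (Function.update (Function.update c j (c t)) ℓ
        ((Function.update c j (c t)) j)) := by
        rw [Function.update_of_ne htj, Function.update_self]
    _ = minor f ℓ j (Function.update c j (c t)) := rfl
    _ = minor f i j (Function.update c j (c t)) := hAjEq _

lemma chainBjAux (σ : Fin n) (hσj : σ ≠ j)
    (hBj : ∀ a v, minor f ℓ j (Function.update a j v) = minor f ℓ j a)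
    (hAσEq : ∀ a, minor f ℓ σ a = minor f i j a) :
    ∀ c, minor f ℓ j c = minor f i j (Function.update c j (c σ)) := by
  intro c
  calc minor f ℓ j c = minor f ℓ j (Function.update c j (c σ)) := (hBj c (c σ)).symm
    _ = f (Function.update (Function.update c j (c σ)) ℓ
        ((Function.update c j (c σ)) j)) := rfl
    _ = f (Function.update (Function.update c j (c σ)) ℓ
        ((Function.update c j (c σ)) σ)) := by
        rw [Function.update_self, Function.update_of_ne hσj]
    _ = minor f ℓ σ (Function.update c j (c σ)) := rfl
    _ = minor f i j (Function.update c j (c σ)) := hAσEq _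

lemma finishGen (s t : Fin n) (hti : t ≠ i) (htj : t ≠ j)
    (hchain : ∀ c, minor f ℓ s c = minor f i j (Function.update c j (c t))) : False := by
  apply itrick f i j ℓ hij hli hlj hHl hHess t htj
  intro a
  calc minor f i j a
      = minor f ℓ s (Function.update a i (a j)) := (l2 f i j ℓ hij hli hlj hHl hHess s a).symm
    _ = minor f i j (Function.update (Function.update a i (a j)) j
        ((Function.update a i (a j)) t)) := hchain _
    _ = minor f i j (Function.update (Function.update a i (a j)) j (a t)) := by
        rw [Function.update_of_ne hti]
    _ = minor f i j (Function.update (Function.update a j (a t)) i (a j)) := by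
        rw [Function.update_comm hij]
    _ = minor f i j (Function.update a j (a t)) := notEss_minor_fst f hij _ _


lemma btrick (σ₀ : Fin n) (hσi : σ₀ ≠ i) (hσj : σ₀ ≠ j) (hσl : σ₀ ≠ ℓ)
    (hAσEq : ∀ a, minor f ℓ σ₀ a = minor f i j a)
    (hchainI : ∀ c, minor f ℓ i c = minor f i j (Function.update c j (c i))) : False := by
  apply itrick f i j ℓ hij hli hlj hHl hHess σ₀ hσj
  intro a
  set b := Function.update (Function.update a ℓ (a σ₀)) i (a σ₀) with hb
  have hbl : b ℓ = a σ₀ := by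
    rw [hb, Function.update_of_ne hli, Function.update_self]
  have hbi : b i = a σ₀ := by rw [hb, Function.update_self]
  have hbs : b σ₀ = a σ₀ := by
    rw [hb, Function.update_of_ne hσi, Function.update_of_ne hσl]
  have h1 : minor f ℓ σ₀ b = f b := by
    show f (Function.update b ℓ (b σ₀)) = f b
    rw [hbs, ← hbl, Function.update_eq_self]
  have h2 : minor f ℓ i b = f b := by
    show f (Function.update b ℓ (b i)) = f b
    rw [hbi, ← hbl, Function.update_eq_self]
  have h3 : minor f i j b = minor f i j a := by
    rw [hb, notEss_minor_fst f hij, hHl]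
  have h4 : minor f i j (Function.update b j (a σ₀))
      = minor f i j (Function.update a j (a σ₀)) := by
    rw [hb, Function.update_comm hij, notEss_minor_fst f hij,
      Function.update_comm hlj, hHl]
  calc minor f i j a = minor f i j b := h3.symm
    _ = minor f ℓ σ₀ b := (hAσEq b).symm
    _ = f b := h1
    _ = minor f ℓ i b := h2.symm
    _ = minor f i j (Function.update b j (b i)) := hchainI b
    _ = minor f i j (Function.update b j (a σ₀)) := by rw [hbi]
    _ = minor f i j (Function.update a j (a σ₀)) := h4

lemma btrick2 (t : Fin n) (hti : t ≠ i) (htj : t ≠ j) (htl : t ≠ ℓ)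
    (hAiEq : ∀ a, minor f ℓ i a = minor f i j a)
    (hBt : ∀ a v, minor f ℓ t (Function.update a j v) = minor f ℓ t a) : False := by
  apply itrick f i j ℓ hij hli hlj hHl hHess t htj
  intro a
  set b := Function.update (Function.update a ℓ (a t)) i (a t) with hb
  have hbl : b ℓ = a t := by rw [hb, Function.update_of_ne hli, Function.update_self]
  have hbi : b i = a t := by rw [hb, Function.update_self]
  have hbt : b t = a t := by rw [hb, Function.update_of_ne hti, Function.update_of_ne htl]
  have h1 : minor f ℓ i b = f b := by
    show f (Function.update b ℓ (b i)) = f b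
    rw [hbi, ← hbl, Function.update_eq_self]
  have h2 : minor f ℓ t b = f b := by
    show f (Function.update b ℓ (b t)) = f b
    rw [hbt, ← hbl, Function.update_eq_self]
  have h3 : minor f i j b = minor f i j a := by
    rw [hb, notEss_minor_fst f hij, hHl]
  set X := Function.update b j (a t) with hX
  have hXl : X ℓ = a t := by rw [hX, Function.update_of_ne hlj, hbl]
  have hXt : X t = a t := by rw [hX, Function.update_of_ne htj, hbt]
  have hXi : X i = a t := by rw [hX, Function.update_of_ne hij, hbi]
  have h4 : minor f ℓ t X = f X := by
    show f (Function.update X ℓ (X t)) = f X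
    rw [hXt, ← hXl, Function.update_eq_self]
  have h5 : minor f ℓ i X = f X := by
    show f (Function.update X ℓ (X i)) = f X
    rw [hXi, ← hXl, Function.update_eq_self]
  have h6 : f b = f X := by
    have h := hBt b (a t)
    rw [← hX] at h
    calc f b = minor f ℓ t b := h2.symm
      _ = minor f ℓ t X := h.symm
      _ = f X := h4
  have h7 : minor f i j X = minor f i j (Function.update a j (a t)) := by
    rw [hX, hb, Function.update_comm hij, notEss_minor_fst f hij,
      Function.update_comm hlj, hHl]
  calc minor f i j a = minor f i j b := h3.symm
    _ = minor f ℓ i b := (hAiEq b).symm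
    _ = f b := h1
    _ = f X := h6
    _ = minor f ℓ i X := h5.symm
    _ = minor f i j X := hAiEq X
    _ = minor f i j (Function.update a j (a t)) := h7


lemma forward_core (hn4 : 4 ≤ n)
    (hexists4 : ∀ a b c : Fin n, ∃ d : Fin n, d ≠ a ∧ d ≠ b ∧ d ≠ c)
    (hminor2 : ∀ p q : Fin n, p ≠ q →
      ∃ y, y ≠ p ∧ ∀ a v, minor f p q (Function.update a y v) = minor f p q a) :
    ∃ (h₀ : (Fin n → Fin k) → Fin k) (w : Fin n),
      w ≠ ℓ ∧
      (∀ a v, h₀ (Function.update a ℓ v) = h₀ a) ∧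
      (∀ a v, h₀ (Function.update a w v) = h₀ a) ∧
      (∀ y, y ≠ ℓ → y ≠ w → Essential h₀ y) ∧
      (∀ s, s ≠ ℓ → ∀ a, f (Function.update a ℓ (a s)) = h₀ a) := by
  have AEQ := aToEq f i j ℓ hij hli hlj hHl hHess
  have FIN := finishGen f i j ℓ hij hli hlj hHl hHess
  have CBA := chainBjAux f i j ℓ hij hli hlj hHl hHess
  have CBT := chainBt f i j ℓ hij hli hlj hHl hHess
  have BT1 := btrick f i j ℓ hij hli hlj hHl hHess
  have BT2 := btrick2 f i j ℓ hij hli hlj hHl hHess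
  have FUN := funnel f i j ℓ hij hli hlj hHl hHess
  have K1 : ∀ s, s ≠ ℓ →
      (∀ a v, minor f ℓ s (Function.update a i v) = minor f ℓ s a) ∨
      (∀ a v, minor f ℓ s (Function.update a j v) = minor f ℓ s a) := by
    intro s hs
    obtain ⟨y, hyl, hy⟩ := hminor2 ℓ s (Ne.symm hs)
    by_cases hyi : y = i
    · left; rw [← hyi]; exact hy
    by_cases hyj : y = j
    · right; rw [← hyj]; exact hy
    · exfalso
      have hkey := FUN s y hyi hyj hyl hy
      exact absurd (hHess y hyi hyl) ((not_essential_iff _ _).mpr hkey)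
  by_cases hA : ∃ σ, σ ≠ ℓ ∧ ∀ a v, minor f ℓ σ (Function.update a i v) = minor f ℓ σ a
  · -- CASE I
    obtain ⟨σ, hσl, hAσ⟩ := hA
    have hAj : ∀ a v, minor f ℓ j (Function.update a i v) = minor f ℓ j a := by
      rcases K1 j (Ne.symm hlj) with h | hBj
      · exact h
      · exfalso
        by_cases hσi : σ = i
        · obtain ⟨t, hti, htj, htl⟩ := hexists4 i j ℓ
          rcases K1 t htl with hAt | hBt
          · exact FIN j t hti htj (CBA t htj hBj (AEQ t hAt))
          · exact BT2 t hti htj htl (AEQ i (hσi ▸ hAσ)) hBt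
        · by_cases hσj : σ = j
          · have hEq := AEQ j (hσj ▸ hAσ)
            have hkey : ∀ a v, minor f i j (Function.update a j v) = minor f i j a := by
              intro a v
              rw [← hEq, ← hEq a]
              exact hBj a v
            exact absurd (hHess j hij.symm hlj.symm) ((not_essential_iff _ _).mpr hkey)
          · exact FIN j σ hσi hσj (CBA σ hσj hBj (AEQ σ hAσ))
    have hAjEq := AEQ j hAj
    have hAllBy : ∀ t, t ≠ i → t ≠ j → t ≠ ℓ → ∀ a, minor f ℓ t a = minor f i j a := by
      intro t hti htj htl
      rcases K1 t htl with hAt | hBt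
      · exact AEQ t hAt
      · exact (FIN t t hti htj (CBT t htj hBt hAjEq)).elim
    have hAiEq : ∀ a, minor f ℓ i a = minor f i j a := by
      rcases K1 i (Ne.symm hli) with hAi | hBi
      · exact AEQ i hAi
      · exfalso
        obtain ⟨t, hti, htj, htl⟩ := hexists4 i j ℓ
        exact BT1 t hti htj htl (hAllBy t hti htj htl) (CBT i hij hBi hAjEq)
    refine ⟨minor f i j, i, hli.symm, hHl, notEss_minor_fst f hij, ?_, ?_⟩
    · intro y hyl hyi
      exact hHess y hyi hyl
    · intro s hs a
      show minor f ℓ s a = minor f i j a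
      by_cases hsi : s = i
      · rw [hsi]; exact hAiEq a
      by_cases hsj : s = j
      · rw [hsj]; exact hAjEq a
      · exact hAllBy s hsi hsj hs a
  · -- CASE II
    push_neg at hA
    have hBall : ∀ s, s ≠ ℓ → ∀ a v,
        minor f ℓ s (Function.update a j v) = minor f ℓ s a := by
      intro s hs
      rcases K1 s hs with hAs | hBs
      · obtain ⟨a, v, hne⟩ := hA s hs
        exact absurd (hAs a v) hne
      · exact hBs
    have hBj := hBall j (Ne.symm hlj)
    have hEq : ∀ s, s ≠ ℓ → ∀ c, minor f ℓ s c = minor f ℓ j c := by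
      intro s hs c
      by_cases hsj : s = j
      · rw [hsj]
      · calc minor f ℓ s c
            = minor f ℓ s (Function.update c j (c s)) := (hBall s hs c (c s)).symm
          _ = f (Function.update (Function.update c j (c s)) ℓ
              ((Function.update c j (c s)) s)) := rfl
          _ = f (Function.update (Function.update c j (c s)) ℓ
              ((Function.update c j (c s)) j)) := by
              rw [Function.update_of_ne hsj, Function.update_self]
          _ = minor f ℓ j (Function.update c j (c s)) := rfl
          _ = minor f ℓ j c := hBj c (c s)
    refine ⟨minor f ℓ j, j, hlj.symm, notEss_minor_fst f hlj, hBj, ?_, ?_⟩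
    · intro y hyl hyj
      by_cases hyi : y = i
      · by_contra hcon
        rw [not_essential_iff] at hcon
        rw [hyi] at hcon
        obtain ⟨a, v, hne⟩ := hA j (Ne.symm hlj)
        exact absurd (hcon a v) hne
      · by_contra hcon
        rw [not_essential_iff] at hcon
        have hkey := FUN j y hyi hyj hyl hcon
        exact absurd (hHess y hyi hyl) ((not_essential_iff _ _).mpr hkey)
    · intro s hs a
      show minor f ℓ s a = minor f ℓ j a
      exact hEq s hs a

end Core

lemma mainB (f h₀ : (Fin n → Fin k) → Fin k) (u w : Fin n) (huw : u ≠ w)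
    (hexists4 : ∀ a b c : Fin n, ∃ d : Fin n, d ≠ a ∧ d ≠ b ∧ d ≠ c)
    (hminor2 : ∀ p q : Fin n, p ≠ q →
      ∃ y, y ≠ p ∧ ∀ a v, minor f p q (Function.update a y v) = minor f p q a)
    (hNu : ∀ a v, h₀ (Function.update a u v) = h₀ a)
    (hNw : ∀ a v, h₀ (Function.update a w v) = h₀ a)
    (Pd : ∀ s, s ≠ u → ∀ a, f (Function.update a u (a s)) = h₀ a) :
    ∀ b : Fin n → Fin k, ∀ p q : Fin n, p ≠ q → b p = b q → f b = h₀ b := by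
  have hcol : ∀ b : Fin n → Fin k, ∀ s, s ≠ u → b u = b s → f b = h₀ b := by
    intro b s hs hbs
    have hupd : Function.update b u (b s) = b := by rw [← hbs, Function.update_eq_self]
    calc f b = f (Function.update b u (b s)) := by rw [hupd]
      _ = h₀ b := Pd s hs b
  intro b p q hpq hbpq
  by_cases hup : u = p
  · subst hup
    exact hcol b q (Ne.symm hpq) hbpq
  by_cases huq : u = q
  · subst huq
    exact hcol b p hpq hbpq.symm
  have hpu : p ≠ u := fun h => hup h.symm
  have hqu : q ≠ u := fun h => huq h.symm
  obtain ⟨y, hyp, hyN⟩ := hminor2 p q hpq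
  have hdiag : ∀ c : Fin n → Fin k, c p = c q → minor f p q c = f c := by
    intro c hc
    show f (Function.update c p (c q)) = f c
    rw [← hc, Function.update_eq_self]
  by_cases hyu : y = u
  · subst hyu
    have h1 : f b = f (Function.update b y (b q)) := by
      calc f b = minor f p q b := (hdiag b hbpq).symm
        _ = minor f p q (Function.update b y (b q)) := (hyN b (b q)).symm
        _ = f (Function.update b y (b q)) := hdiag _ (by
            rw [Function.update_of_ne hpu, Function.update_of_ne hqu]
            exact hbpq)
    have h2 : f (Function.update b y (b q)) = h₀ (Function.update b y (b q)) := by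
      apply hcol _ q hqu
      rw [Function.update_self, Function.update_of_ne hqu]
    rw [h1, h2, hNu]
  by_cases hyq : y = q
  · subst hyq
    obtain ⟨m, hmp, hmy, hmu⟩ := hexists4 p y u
    have boot : ∀ d : Fin n → Fin k, d p = d y → ∀ v,
        h₀ (Function.update (Function.update d y v) p v) = h₀ d := by
      intro d hd v
      have f1 : f (Function.update d u (d m)) = h₀ d := Pd m hmu d
      have f2 : f (Function.update (Function.update (Function.update d y v) p v) u (d m))
          = h₀ (Function.update (Function.update d y v) p v) := by
        have hthis := Pd m hmu (Function.update (Function.update d y v) p v)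
        rwa [Function.update_of_ne hmp, Function.update_of_ne hmy] at hthis
      have hc2 : Function.update (Function.update (Function.update d u (d m)) y v) p v
          = Function.update (Function.update (Function.update d y v) p v) u (d m) := by
        rw [Function.update_comm (show u ≠ y from fun h => hyu h.symm)]
        rw [Function.update_comm (show u ≠ p from hup)]
      have f3 : f (Function.update d u (d m))
          = f (Function.update (Function.update (Function.update d u (d m)) y v) p v) := by
        set c := Function.update d u (d m) with hcdef
        have hcp : c p = c y := by
          rw [hcdef, Function.update_of_ne hpu, Function.update_of_ne hqu]
          exact hd
        calc f c = minor f p y c := (hdiag c hcp).symm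
          _ = minor f p y (Function.update c y v) := (hyN c v).symm
          _ = f (Function.update (Function.update c y v) p
              ((Function.update c y v) y)) := rfl
          _ = f (Function.update (Function.update c y v) p v) := by
              rw [Function.update_self]
      calc h₀ (Function.update (Function.update d y v) p v)
          = f (Function.update (Function.update (Function.update d y v) p v) u (d m)) :=
            f2.symm
        _ = f (Function.update (Function.update (Function.update d u (d m)) y v) p v) := by
            rw [hc2]
        _ = f (Function.update d u (d m)) := f3.symm
        _ = h₀ d := f1
    have h1 : f b = f (Function.update (Function.update b y (b u)) p (b u)) := by
      calc f b = minor f p y b := (hdiag b hbpq).symm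
        _ = minor f p y (Function.update b y (b u)) := (hyN b (b u)).symm
        _ = f (Function.update (Function.update b y (b u)) p
            ((Function.update b y (b u)) y)) := rfl
        _ = f (Function.update (Function.update b y (b u)) p (b u)) := by
            rw [Function.update_self]
    have h2 : f (Function.update (Function.update b y (b u)) p (b u))
        = h₀ (Function.update (Function.update b y (b u)) p (b u)) := by
      apply hcol _ p hpu
      rw [Function.update_of_ne hup, Function.update_of_ne huq, Function.update_self]
    rw [h1, h2, boot b hbpq (b u)]
  by_cases hyw : y = w
  · subst hyw
    have hpy : p ≠ y := fun h => hyp h.symm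
    have hqy : q ≠ y := fun h => hyq h.symm
    have h1 : f b = f (Function.update b y (b u)) := by
      calc f b = minor f p q b := (hdiag b hbpq).symm
        _ = minor f p q (Function.update b y (b u)) := (hyN b (b u)).symm
        _ = f (Function.update b y (b u)) := hdiag _ (by
            rw [Function.update_of_ne hpy, Function.update_of_ne hqy]
            exact hbpq)
    have h2 : f (Function.update b y (b u)) = h₀ (Function.update b y (b u)) := by
      apply hcol _ y (Ne.symm huw)
      rw [Function.update_of_ne huw, Function.update_self]
    rw [h1, h2, hNw]
  · have hpy : p ≠ y := fun h => hyp h.symm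
    have hqy : q ≠ y := fun h => hyq h.symm
    have huy : u ≠ y := fun h => hyu h.symm
    have booty : ∀ d : Fin n → Fin k, d p = d q → ∀ v,
        h₀ (Function.update d y v) = h₀ d := by
      intro d hd v
      have f1 : f (Function.update d u (d p)) = h₀ d := Pd p hpu d
      have f2 : f (Function.update (Function.update d y v) u (d p))
          = h₀ (Function.update d y v) := by
        have hthis := Pd p hpu (Function.update d y v)
        rwa [Function.update_of_ne hpy] at hthis
      have hc2 : Function.update (Function.update d u (d p)) y v
          = Function.update (Function.update d y v) u (d p) := by
        rw [Function.update_comm huy]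
      have f3 : f (Function.update d u (d p))
          = f (Function.update (Function.update d u (d p)) y v) := by
        set c := Function.update d u (d p) with hcdef
        have hcp : c p = c q := by
          rw [hcdef, Function.update_of_ne hpu, Function.update_of_ne hqu]
          exact hd
        have hcp2 : (Function.update c y v) p = (Function.update c y v) q := by
          rw [Function.update_of_ne hpy, Function.update_of_ne hqy]
          exact hcp
        calc f c = minor f p q c := (hdiag c hcp).symm
          _ = minor f p q (Function.update c y v) := (hyN c v).symm
          _ = f (Function.update c y v) := hdiag _ hcp2
      calc h₀ (Function.update d y v)
          = f (Function.update (Function.update d y v) u (d p)) := f2.symm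
        _ = f (Function.update (Function.update d u (d p)) y v) := by rw [hc2]
        _ = f (Function.update d u (d p)) := f3.symm
        _ = h₀ d := f1
    have h1 : f b = f (Function.update b y (b u)) := by
      have hbp2 : (Function.update b y (b u)) p = (Function.update b y (b u)) q := by
        rw [Function.update_of_ne hpy, Function.update_of_ne hqy]
        exact hbpq
      calc f b = minor f p q b := (hdiag b hbpq).symm
        _ = minor f p q (Function.update b y (b u)) := (hyN b (b u)).symm
        _ = f (Function.update b y (b u)) := hdiag _ hbp2
    have h2 : f (Function.update b y (b u)) = h₀ (Function.update b y (b u)) := by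
      apply hcol _ y hyu
      rw [Function.update_of_ne huy, Function.update_self]
    rw [h1, h2, booty b hbpq (b u)]

lemma essCount_le (F : (Fin n → Fin k) → Fin k) : essCount F ≤ n := by
  unfold essCount
  calc (Finset.univ.filter (fun i => Essential F i)).card ≤ Finset.univ.card :=
        Finset.card_le_card (Finset.filter_subset _ _)
    _ = n := by simp

lemma card_iness (F : (Fin n → Fin k) → Fin k) :
    (Finset.univ.filter (fun y => ¬ Essential F y)).card = n - essCount F := by
  have h := Finset.card_filter_add_card_filter_not
    (s := (Finset.univ : Finset (Fin n))) (p := fun y => Essential F y)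
  simp only [Finset.card_univ, Fintype.card_fin] at h
  unfold essCount
  omega

lemma exists_second {F : (Fin n → Fin k) → Fin k} (hn : 2 ≤ n)
    (hle : essCount F ≤ n - 2) (p : Fin n) :
    ∃ y, y ≠ p ∧ ¬ Essential F y := by
  have h1 : 1 < (Finset.univ.filter (fun y => ¬ Essential F y)).card := by
    rw [card_iness]; omega
  obtain ⟨y, hy, hyp⟩ := Finset.exists_mem_ne h1 p
  exact ⟨y, hyp, (Finset.mem_filter.mp hy).2⟩

lemma exists_fourth (hn : 4 ≤ n) (a b c : Fin n) :
    ∃ d : Fin n, d ≠ a ∧ d ≠ b ∧ d ≠ c := by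
  by_contra h
  push_neg at h
  have hsub : (Finset.univ : Finset (Fin n)) ⊆ {a, b, c} := by
    intro x _
    simp only [Finset.mem_insert, Finset.mem_singleton]
    by_cases h1 : x = a
    · exact Or.inl h1
    by_cases h2 : x = b
    · exact Or.inr (Or.inl h2)
    · exact Or.inr (Or.inr (h x h1 h2))
  have hc : (Finset.univ : Finset (Fin n)).card ≤ ({a, b, c} : Finset (Fin n)).card :=
    Finset.card_le_card hsub
  have h3 : ({a, b, c} : Finset (Fin n)).card ≤ 3 := by
    apply le_trans (Finset.card_insert_le _ _)
    have := Finset.card_insert_le b ({c} : Finset (Fin n))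
    simp at this ⊢
    omega
  simp [Finset.card_univ] at hc
  omega

lemma essCount_eq_n (f : (Fin n → Fin k) → Fin k) (hess : ∀ y : Fin n, Essential f y) :
    essCount f = n := by
  unfold essCount
  rw [Finset.filter_true_of_mem (fun x _ => hess x)]
  simp

lemma essCount_eq_of_iness_pair (h₀ : (Fin n → Fin k) → Fin k) (u w : Fin n) (huw : u ≠ w)
    (hNu : ∀ a v, h₀ (Function.update a u v) = h₀ a)
    (hNw : ∀ a v, h₀ (Function.update a w v) = h₀ a)
    (hEss : ∀ y, y ≠ u → y ≠ w → Essential h₀ y) :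
    essCount h₀ = n - 2 := by
  unfold essCount
  have hfe : Finset.univ.filter (fun y => Essential h₀ y)
      = Finset.univ \ {u, w} := by
    ext y
    simp only [Finset.mem_filter, Finset.mem_univ, true_and, Finset.mem_sdiff,
      Finset.mem_insert, Finset.mem_singleton]
    constructor
    · intro hy
      rintro (rfl | rfl)
      · exact absurd hy ((not_essential_iff _ _).mpr hNu)
      · exact absurd hy ((not_essential_iff _ _).mpr hNw)
    · intro hy
      push_neg at hy
      exact hEss y hy.1 hy.2
  rw [hfe, Finset.card_sdiff_of_subset (Finset.subset_univ _)]
  have hc2 : ({u, w} : Finset (Fin n)).card = 2 := by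
    rw [Finset.card_insert_of_notMem (by simp [huw]), Finset.card_singleton]
  rw [hc2]
  simp

lemma essCount_le_of_pair (F : (Fin n → Fin k) → Fin k) (x y : Fin n) (hxy : x ≠ y)
    (hNx : ∀ a v, F (Function.update a x v) = F a)
    (hNy : ∀ a v, F (Function.update a y v) = F a) : essCount F ≤ n - 2 := by
  unfold essCount
  have hsub : Finset.univ.filter (fun z => Essential F z) ⊆ Finset.univ \ {x, y} := by
    intro z hz
    simp only [Finset.mem_filter, Finset.mem_univ, true_and] at hz
    simp only [Finset.mem_sdiff, Finset.mem_univ, true_and, Finset.mem_insert,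
      Finset.mem_singleton]
    rintro (rfl | rfl)
    · exact absurd hz ((not_essential_iff _ _).mpr hNx)
    · exact absurd hz ((not_essential_iff _ _).mpr hNy)
  calc (Finset.univ.filter (fun z => Essential F z)).card
      ≤ (Finset.univ \ ({x, y} : Finset (Fin n))).card := Finset.card_le_card hsub
    _ = n - 2 := by
      rw [Finset.card_sdiff_of_subset (Finset.subset_univ _)]
      have hc2 : ({x, y} : Finset (Fin n)).card = 2 := by
        rw [Finset.card_insert_of_notMem (by simp [hxy]), Finset.card_singleton]
      rw [hc2]
      simp

end GapProof


theorem mem_G_plus_iff_decomposition {k n : ℕ} (hn : 3 < n) (hnk : n ≤ k)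
    (f : (Fin n → Fin k) → Fin k)
    (hess : ∀ i : Fin n, Essential f i) :
    (gap f = 2 ∧
      ∃ i j : Fin n, i ≠ j ∧ Essential (minor f i j) j ∧
        essCount (minor f i j) = n - 2) ↔
      ∃ h g : (Fin n → Fin k) → Fin k,
        f = (fun a => h a + g a) ∧
        essCount h = n - 2 ∧
        (∀ i : Fin n, Essential g i) ∧
        (∀ i j : Fin n, i ≠ j →
          minor g i j = fun _ => (⟨0, by omega⟩ : Fin k)) := by
  haveI : NeZero k := ⟨by omega⟩
  have hzero : (⟨0, by omega⟩ : Fin k) = 0 := by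
    apply Fin.ext
    simp
  have hexists4 : ∀ a b c : Fin n, ∃ d : Fin n, d ≠ a ∧ d ≠ b ∧ d ≠ c :=
    GapProof.exists_fourth (by omega)
  have hessf : essCount f = n := GapProof.essCount_eq_n f hess
  constructor
  · rintro ⟨hgap, i, j, hij, hEj, hcnt⟩
    unfold gap at hgap
    rw [hessf] at hgap
    have hSle : Finset.sup
        (Finset.univ.filter
          (fun p : Fin n × Fin n => p.1 ≠ p.2 ∧ Essential f p.1 ∧ Essential f p.2))
        (fun p => essCount (minor f p.1 p.2)) ≤ n :=
      Finset.sup_le (fun p _ => GapProof.essCount_le _)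
    have hminor : ∀ p q : Fin n, p ≠ q → essCount (minor f p q) ≤ n - 2 := by
      intro p q hpq
      have hmem : ((p, q) : Fin n × Fin n) ∈ Finset.univ.filter
          (fun p : Fin n × Fin n => p.1 ≠ p.2 ∧ Essential f p.1 ∧ Essential f p.2) :=
        Finset.mem_filter.mpr ⟨Finset.mem_univ _, hpq, hess p, hess q⟩
      have hle := Finset.le_sup
        (f := fun p : Fin n × Fin n => essCount (minor f p.1 p.2)) hmem
      simp only at hle
      omega
    have hminor2 : ∀ p q : Fin n, p ≠ q →
        ∃ y, y ≠ p ∧ ∀ a v, minor f p q (Function.update a y v) = minor f p q a := by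
      intro p q hpq
      obtain ⟨y, hyp, hy⟩ := GapProof.exists_second (by omega) (hminor p q hpq) p
      exact ⟨y, hyp, (GapProof.not_essential_iff _ _).mp hy⟩
    have hcard2 : (Finset.univ.filter (fun y => ¬ Essential (minor f i j) y)).card = 2 := by
      rw [GapProof.card_iness, hcnt]
      omega
    obtain ⟨x, z, hxz, hset⟩ := Finset.card_eq_two.mp hcard2
    have hiN : i ∈ Finset.univ.filter (fun y => ¬ Essential (minor f i j) y) := by
      simp only [Finset.mem_filter, Finset.mem_univ, true_and]
      exact (GapProof.not_essential_iff _ _).mpr (GapProof.notEss_minor_fst f hij)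
    rw [hset] at hiN
    simp only [Finset.mem_insert, Finset.mem_singleton] at hiN
    obtain ⟨ℓ, hℓset, hℓi⟩ : ∃ ℓ, ({x, z} : Finset (Fin n)) = {i, ℓ} ∧ ℓ ≠ i := by
      rcases hiN with rfl | rfl
      · exact ⟨z, rfl, Ne.symm hxz⟩
      · exact ⟨x, by rw [Finset.pair_comm], hxz⟩
    have hNset : Finset.univ.filter (fun y => ¬ Essential (minor f i j) y) = {i, ℓ} := by
      rw [hset, hℓset]
    have hHl : ∀ a v, minor f i j (Function.update a ℓ v) = minor f i j a := by
      apply (GapProof.not_essential_iff _ _).mp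
      have hmem : ℓ ∈ Finset.univ.filter (fun y => ¬ Essential (minor f i j) y) := by
        rw [hNset]
        simp
      exact (Finset.mem_filter.mp hmem).2
    have hHess : ∀ y, y ≠ i → y ≠ ℓ → Essential (minor f i j) y := by
      intro y hyi hyl
      by_contra hcon
      have hmem : y ∈ Finset.univ.filter (fun y => ¬ Essential (minor f i j) y) := by
        simp only [Finset.mem_filter, Finset.mem_univ, true_and]
        exact hcon
      rw [hNset] at hmem
      simp only [Finset.mem_insert, Finset.mem_singleton] at hmem
      rcases hmem with rfl | rfl
      · exact hyi rfl
      · exact hyl rfl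
    have hlj : ℓ ≠ j := by
      intro hh
      subst hh
      exact absurd hEj ((GapProof.not_essential_iff _ _).mpr hHl)
    obtain ⟨h₀, w, hwl, hNu, hNw, hEssH, Pd⟩ :=
      GapProof.forward_core f i j ℓ hij hℓi hlj hHl hHess (by omega) hexists4 hminor2
    have hagree := GapProof.mainB f h₀ ℓ w (Ne.symm hwl) hexists4 hminor2 hNu hNw Pd
    refine ⟨h₀, fun a => f a - h₀ a, ?_, ?_, ?_, ?_⟩
    · funext a
      rw [add_comm]
      exact (sub_add_cancel (f a) (h₀ a)).symm
    · exact GapProof.essCount_eq_of_iness_pair h₀ ℓ w (Ne.symm hwl) hNu hNw hEssH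
    · intro y
      by_contra hcon
      rw [GapProof.not_essential_iff] at hcon
      have hg0 : ∀ a, f a - h₀ a = 0 := by
        intro a
        obtain ⟨t, hty, -, -⟩ := hexists4 y y y
        have h1 : f (Function.update a y (a t)) - h₀ (Function.update a y (a t))
            = f a - h₀ a := hcon a (a t)
        have hagr : f (Function.update a y (a t)) = h₀ (Function.update a y (a t)) := by
          apply hagree _ y t (Ne.symm hty)
          rw [Function.update_self, Function.update_of_ne hty]
        rw [← h1, hagr, sub_self]
      have hfh : ∀ a, f a = h₀ a := fun a => sub_eq_zero.mp (hg0 a)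
      obtain ⟨a, v, hne⟩ := hess w
      apply hne
      rw [hfh, hfh, hNw]
    · intro p q hpq
      funext a
      show f (Function.update a p (a q)) - h₀ (Function.update a p (a q)) = _
      rw [hagree _ p q hpq (by rw [Function.update_self, Function.update_of_ne hpq.symm]),
        sub_self, hzero]
  · rintro ⟨h, g, hfg, hch, hgess, hgmin⟩
    have hg0 : ∀ (a : Fin n → Fin k) (p q : Fin n), p ≠ q →
        g (Function.update a p (a q)) = 0 := by
      intro a p q hpq
      have hthis := congrFun (hgmin p q hpq) a
      rw [hzero] at hthis
      exact hthis
    have hmin_pt : ∀ p q : Fin n, p ≠ q → ∀ a,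
        minor f p q a = h (Function.update a p (a q)) := by
      intro p q hpq a
      show f (Function.update a p (a q)) = _
      have hthis := congrFun hfg (Function.update a p (a q))
      rw [hthis]
      show h _ + g _ = _
      rw [hg0 a p q hpq, add_zero]
    have hcard2 : (Finset.univ.filter (fun y => ¬ Essential h y)).card = 2 := by
      rw [GapProof.card_iness, hch]
      omega
    obtain ⟨u, v, huv, hset⟩ := Finset.card_eq_two.mp hcard2
    have hNmem : ∀ y ∈ ({u, v} : Finset (Fin n)), ∀ a w, h (Function.update a y w) = h a := by
      intro y hy
      apply (GapProof.not_essential_iff _ _).mp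
      have : y ∈ Finset.univ.filter (fun y => ¬ Essential h y) := by rw [hset]; exact hy
      exact (Finset.mem_filter.mp this).2
    have hNu : ∀ a w, h (Function.update a u w) = h a := hNmem u (by simp)
    have hNv : ∀ a w, h (Function.update a v w) = h a := hNmem v (by simp)
    have hEssPos : 0 < (Finset.univ.filter (fun y => Essential h y)).card := by
      have : (Finset.univ.filter (fun y => Essential h y)).card = n - 2 := hch
      omega
    obtain ⟨y₀, hy₀mem⟩ := Finset.card_pos.mp hEssPos
    have hy₀ : Essential h y₀ := (Finset.mem_filter.mp hy₀mem).2
    have hy₀u : u ≠ y₀ := by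
      intro hh
      exact absurd hy₀ (hh ▸ (GapProof.not_essential_iff _ _).mpr hNu)
    have hminIJ : minor f u y₀ = h := by
      funext a
      rw [hmin_pt u y₀ hy₀u a, hNu]
    have hSeq : Finset.sup
        (Finset.univ.filter
          (fun p : Fin n × Fin n => p.1 ≠ p.2 ∧ Essential f p.1 ∧ Essential f p.2))
        (fun p => essCount (minor f p.1 p.2)) = n - 2 := by
      apply le_antisymm
      · apply Finset.sup_le
        rintro ⟨p, q⟩ hmem
        have hpq : p ≠ q := (Finset.mem_filter.mp hmem).2.1
        by_cases hpN : Essential h p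
        · have hpu : p ≠ u := by
            intro hh
            exact absurd hpN (hh ▸ (GapProof.not_essential_iff _ _).mpr hNu)
          have hpv : p ≠ v := by
            intro hh
            exact absurd hpN (hh ▸ (GapProof.not_essential_iff _ _).mpr hNv)
          obtain ⟨ν, hνq, hνp, hNν⟩ : ∃ ν, ν ≠ q ∧ ν ≠ p ∧
              ∀ a w, h (Function.update a ν w) = h a := by
            by_cases huq : u = q
            · refine ⟨v, ?_, Ne.symm hpv, hNv⟩
              intro hh
              exact huv (huq.trans hh.symm)
            · exact ⟨u, huq, Ne.symm hpu, hNu⟩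
          apply GapProof.essCount_le_of_pair _ p ν (Ne.symm hνp)
            (GapProof.notEss_minor_fst f hpq)
          intro a w
          calc minor f p q (Function.update a ν w)
              = h (Function.update (Function.update a ν w) p
                  ((Function.update a ν w) q)) := hmin_pt p q hpq _
            _ = h (Function.update (Function.update a ν w) p (a q)) := by
                rw [Function.update_of_ne (Ne.symm hνq)]
            _ = h (Function.update (Function.update a p (a q)) ν w) := by
                rw [Function.update_comm hνp]
            _ = h (Function.update a p (a q)) := hNν _ _
            _ = minor f p q a := (hmin_pt p q hpq a).symm
        · have hNp := (GapProof.not_essential_iff _ _).mp hpN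
          have heq : minor f p q = h := by
            funext a
            rw [hmin_pt p q hpq a, hNp]
          rw [heq, hch]
      · have hne : u ≠ y₀ := hy₀u
        have hmem : ((u, y₀) : Fin n × Fin n) ∈ Finset.univ.filter
            (fun p : Fin n × Fin n => p.1 ≠ p.2 ∧ Essential f p.1 ∧ Essential f p.2) :=
          Finset.mem_filter.mpr ⟨Finset.mem_univ _, hne, hess u, hess y₀⟩
        have hle := Finset.le_sup
          (f := fun p : Fin n × Fin n => essCount (minor f p.1 p.2)) hmem
        simp only at hle
        rw [hminIJ, hch] at hle
        exact hle
    constructor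
    · unfold gap
      rw [hessf, hSeq]
      omega
    · refine ⟨u, y₀, hy₀u, ?_, ?_⟩
      · rw [hminIJ]
        exact hy₀
      · rw [hminIJ]
        exact hch
end

section
/- Let n > 3 and let f : K^n → K depend essentially on all n variables, with gap(f) = 2, and such that x_v is not essential in f_{u←v} for all u ≠ v. Then every identification minor f_{i←j} is symmetric with respect to its essential variables; in particular if Ess(f_{2←1}) = {x_3,...,x_n} and f_{2←1} = h(x_3,...,x_n), then h(x_3,x_4,x_5,...,x_n) = h(x_4,x_3,x_5,...,x_n) for all arguments. -/
open scoped Classical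

lemma not_ess_update {n k : ℕ} {g : (Fin n → Fin k) → Fin k} {v : Fin n}
    (h : ¬ Essential g v) (a : Fin n → Fin k) (b : Fin k) :
    g (Function.update a v b) = g a := by
  by_contra hne
  exact h ⟨a, b, hne⟩

lemma minor_update_fst {n k : ℕ} (f : (Fin n → Fin k) → Fin k) {i j : Fin n}
    (hij : i ≠ j) (a : Fin n → Fin k) (b : Fin k) :
    minor f i j (Function.update a i b) = minor f i j a := by
  simp [minor, Function.update_idem, Function.update_of_ne hij.symm]

lemma not_ess_fst {n k : ℕ} (f : (Fin n → Fin k) → Fin k) {i j : Fin n}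
    (hij : i ≠ j) : ¬ Essential (minor f i j) i := by
  rintro ⟨a, b, h⟩
  exact h (minor_update_fst f hij a b)

lemma keyB {n k : ℕ} (f : (Fin n → Fin k) → Fin k)
    (hminus : ∀ u v : Fin n, u ≠ v → ¬ Essential (minor f u v) v)
    {i p q : Fin n} (hpi : p ≠ i) (hqi : q ≠ i) (hpq : p ≠ q)
    (b : Fin n → Fin k) (c : Fin k) :
    minor f i p (Function.update b q c) = minor f i q (Function.update b p c) := by
  have A : ∀ a : Fin n → Fin k,
      minor f i p (Function.update a q (a p)) = minor f i q a := by
    intro a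
    have h1 : minor f i q (Function.update a q (a p)) = minor f i q a :=
      not_ess_update (hminus i q hqi.symm) a (a p)
    rw [← h1]
    show f _ = f _
    congr 1
    simp [Function.update_of_ne hpq]
  have h2 := A (Function.update b p c)
  rw [Function.update_self] at h2
  rw [Function.update_comm hpq] at h2
  rw [not_ess_update (hminus i p hpi.symm)] at h2
  exact h2

theorem minors_symmetric {k n : ℕ} (hn : 3 < n)
    (f : (Fin n → Fin k) → Fin k)
    (hess : ∀ i : Fin n, Essential f i)
    (hgap : gap f = 2)
    (hminus : ∀ u v : Fin n, u ≠ v → ¬ Essential (minor f u v) v) :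
    ∀ i j : Fin n, i ≠ j →
      ∀ r s : Fin n, Essential (minor f i j) r → Essential (minor f i j) s →
        ∀ a : Fin n → Fin k,
          minor f i j (a ∘ Equiv.swap r s) = minor f i j a := by
  intro i j hij r s hr hs a
  rcases eq_or_ne r s with rfl | hrs
  · simp
  have hri : r ≠ i := fun h => not_ess_fst f hij (h ▸ hr)
  have hrj : r ≠ j := fun h => hminus i j hij (h ▸ hr)
  have hsi : s ≠ i := fun h => not_ess_fst f hij (h ▸ hs)
  have hsj : s ≠ j := fun h => hminus i j hij (h ▸ hs)
  have hcomp : a ∘ (Equiv.swap r s) =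
      Function.update (Function.update a r (a s)) s (a r) := by
    funext x
    rcases eq_or_ne x r with rfl | hxr
    · simp [Function.update_of_ne hrs]
    rcases eq_or_ne x s with rfl | hxs
    · simp [Equiv.swap_apply_right]
    · simp [Equiv.swap_apply_of_ne_of_ne hxr hxs,
        Function.update_of_ne hxs, Function.update_of_ne hxr]
  rw [hcomp]
  calc minor f i j (Function.update (Function.update a r (a s)) s (a r))
      = minor f i s (Function.update (Function.update a r (a s)) j (a r)) :=
        keyB f hminus hij.symm hsi hsj.symm _ _
    _ = minor f i s (Function.update (Function.update a j (a r)) r (a s)) := by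
        rw [Function.update_comm hrj]
    _ = minor f i r (Function.update (Function.update a j (a r)) s (a s)) :=
        keyB f hminus hsi hri hrs.symm _ _
    _ = minor f i r (Function.update a j (a r)) := by
        rw [Function.update_comm hsj.symm, Function.update_eq_self]
    _ = minor f i j (Function.update a r (a r)) :=
        (keyB f hminus hij.symm hri hrj.symm _ _).symm
    _ = minor f i j a := by rw [Function.update_eq_self]
end
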